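/- arXiv:2006.00029 — 9 statements merged into one kernel-verified Lean document; each statement's English description precedes it below -/
import Mathlib

section
/- Let I ⊆ (0,∞) be an open interval, let f, g : I → ℝ be smooth functions, and let G, H : I → ℝ be smooth with G(r) > 0, G'(r) = 2r(2g(r) + r²f(r))·G(r) and H'(r) = 2r·f(r)·G(r) for all r ∈ I (so G = exp(∫ 2r(2g + r²f) dr) and H = ∫ 2rf·G dr). Let η : ℝ → ℝ be differentiable and define ψ(r,s) := η( (r² − s²) / ((r² − s²)·H(r) − G(r)) ). Then at every point (r,s) with r ∈ I and (r² − s²)H(r) − G(r) ≠ 0, the function ψ satisfies the transport equation [1 − (r² − s²)(2g(r) + f(r)s²)]·r·ψ_s(r,s) + s·ψ_r(r,s) = 0, where subscripts denote partial derivatives. -/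
/-- Partial derivative with respect to the first variable `r`. -/
noncomputable def pderivR (f : ℝ → ℝ → ℝ) (r s : ℝ) : ℝ := deriv (fun t => f t s) r

/-- Partial derivative with respect to the second variable `s`. -/
noncomputable def pderivS (f : ℝ → ℝ → ℝ) (r s : ℝ) : ℝ := deriv (fun t => f r t) s

/-- Proposition 1 (forward direction): any differentiable function `η` of the
first integral `(r² − s²)/((r² − s²)·H(r) − G(r))` solves the transport equation
`[1 − (r² − s²)(2g(r) + f(r)s²)]·r·ψ_s + s·ψ_r = 0`, where
`G = exp(∫ 2r(2g + r²f) dr)` and `H = ∫ 2rf·G dr`. -/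
theorem stmt_0
    (I : Set ℝ) (hI : ∃ a b : ℝ, I = Set.Ioo a b) (hIpos : I ⊆ Set.Ioi (0 : ℝ))
    (f g G H : ℝ → ℝ)
    (hf : ContDiffOn ℝ (⊤ : ℕ∞) f I) (hg : ContDiffOn ℝ (⊤ : ℕ∞) g I)
    (hG : ContDiffOn ℝ (⊤ : ℕ∞) G I) (hH : ContDiffOn ℝ (⊤ : ℕ∞) H I)
    (hGpos : ∀ r ∈ I, 0 < G r)
    (hG' : ∀ r ∈ I, deriv G r = 2 * r * (2 * g r + r ^ 2 * f r) * G r)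
    (hH' : ∀ r ∈ I, deriv H r = 2 * r * f r * G r)
    (η : ℝ → ℝ) (hη : Differentiable ℝ η)
    (ψ : ℝ → ℝ → ℝ)
    (hψ : ∀ r s : ℝ, ψ r s = η ((r ^ 2 - s ^ 2) / ((r ^ 2 - s ^ 2) * H r - G r))) :
    ∀ r ∈ I, ∀ s : ℝ, (r ^ 2 - s ^ 2) * H r - G r ≠ 0 →
      (1 - (r ^ 2 - s ^ 2) * (2 * g r + f r * s ^ 2)) * r * pderivS ψ r s
        + s * pderivR ψ r s = 0 := by
  intro r hr s hD
  obtain ⟨a, b, rfl⟩ := hI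
  have hopen : IsOpen (Set.Ioo a b) := isOpen_Ioo
  -- differentiability of G, H at r
  have hGd : DifferentiableAt ℝ G r :=
    (hG.differentiableOn (by norm_num)).differentiableAt (hopen.mem_nhds hr)
  have hHd : DifferentiableAt ℝ H r :=
    (hH.differentiableOn (by norm_num)).differentiableAt (hopen.mem_nhds hr)
  have hGder : HasDerivAt G (2 * r * (2 * g r + r ^ 2 * f r) * G r) r := by
    have := hGd.hasDerivAt
    rwa [hG' r hr] at this
  have hHder : HasDerivAt H (2 * r * f r * G r) r := by
    have := hHd.hasDerivAt
    rwa [hH' r hr] at this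
  set u0 : ℝ := (r ^ 2 - s ^ 2) / ((r ^ 2 - s ^ 2) * H r - G r) with hu0
  have hη' := (hη u0).hasDerivAt
  -- S derivative
  have hAs : HasDerivAt (fun t : ℝ => r ^ 2 - t ^ 2) (-(2 * s)) s := by
    simpa using ((hasDerivAt_pow 2 s).const_sub (r ^ 2))
  have hDs : HasDerivAt (fun t : ℝ => (r ^ 2 - t ^ 2) * H r - G r) (-(2 * s) * H r) s :=
    (hAs.mul_const (H r)).sub_const (G r)
  have hus : HasDerivAt (fun t : ℝ => (r ^ 2 - t ^ 2) / ((r ^ 2 - t ^ 2) * H r - G r))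
      ((-(2 * s) * ((r ^ 2 - s ^ 2) * H r - G r) - (r ^ 2 - s ^ 2) * (-(2 * s) * H r)) /
        ((r ^ 2 - s ^ 2) * H r - G r) ^ 2) s := hAs.div hDs hD
  have hψs : pderivS ψ r s =
      deriv η u0 * ((-(2 * s) * ((r ^ 2 - s ^ 2) * H r - G r) - (r ^ 2 - s ^ 2) * (-(2 * s) * H r)) /
        ((r ^ 2 - s ^ 2) * H r - G r) ^ 2) := by
    have h := hη'.comp s hus
    have : (fun t : ℝ => ψ r t) =
        fun t : ℝ => η ((r ^ 2 - t ^ 2) / ((r ^ 2 - t ^ 2) * H r - G r)) := by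
      funext t; exact hψ r t
    rw [pderivS, this]
    exact h.deriv
  -- R derivative
  have hAr : HasDerivAt (fun t : ℝ => t ^ 2 - s ^ 2) (2 * r) r := by
    simpa using ((hasDerivAt_pow 2 r).sub_const (s ^ 2))
  have hDr : HasDerivAt (fun t : ℝ => (t ^ 2 - s ^ 2) * H t - G t)
      (2 * r * H r + (r ^ 2 - s ^ 2) * (2 * r * f r * G r)
        - 2 * r * (2 * g r + r ^ 2 * f r) * G r) r :=
    (hAr.mul hHder).sub hGder
  have hur : HasDerivAt (fun t : ℝ => (t ^ 2 - s ^ 2) / ((t ^ 2 - s ^ 2) * H t - G t))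
      ((2 * r * ((r ^ 2 - s ^ 2) * H r - G r) - (r ^ 2 - s ^ 2) *
        (2 * r * H r + (r ^ 2 - s ^ 2) * (2 * r * f r * G r)
          - 2 * r * (2 * g r + r ^ 2 * f r) * G r)) /
        ((r ^ 2 - s ^ 2) * H r - G r) ^ 2) r := hAr.div hDr hD
  have hψr : pderivR ψ r s =
      deriv η u0 * ((2 * r * ((r ^ 2 - s ^ 2) * H r - G r) - (r ^ 2 - s ^ 2) *
        (2 * r * H r + (r ^ 2 - s ^ 2) * (2 * r * f r * G r)
          - 2 * r * (2 * g r + r ^ 2 * f r) * G r)) /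
        ((r ^ 2 - s ^ 2) * H r - G r) ^ 2) := by
    have h := hη'.comp r hur
    have : (fun t : ℝ => ψ t s) =
        fun t : ℝ => η ((t ^ 2 - s ^ 2) / ((t ^ 2 - s ^ 2) * H t - G t)) := by
      funext t; exact hψ t s
    rw [pderivR, this]
    exact h.deriv
  rw [hψs, hψr]
  field_simp
  ring
end

section
/- Let Q = Q(r,s) be a smooth function on an open subset U of {(r,s) ∈ ℝ² : 0 < s < r} such that R₂ := 2Q(2Q − sQ_s) + (1/r)(2Q_r − sQ_rs − rQ_ss) + (r² − s²)(2Q·Q_ss − Q_s²) vanishes identically on U. Then the function ψ(r,s) := (r² − s²)^{3/2}·(Q_s − s·Q_ss) satisfies s·ψ_r + (1 − 2(r² − s²)Q)·r·ψ_s = 0 on U. -/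
/-- `R₂ := 2Q(2Q − sQ_s) + (1/r)(2Q_r − sQ_rs − rQ_ss) + (r² − s²)(2Q·Q_ss − Q_s²)`. -/
noncomputable def R2 (Q : ℝ → ℝ → ℝ) (r s : ℝ) : ℝ :=
  2 * Q r s * (2 * Q r s - s * pderivS Q r s)
    + (1 / r) * (2 * pderivR Q r s - s * pderivR (pderivS Q) r s
        - r * pderivS (pderivS Q) r s)
    + (r ^ 2 - s ^ 2) * (2 * Q r s * pderivS (pderivS Q) r s - (pderivS Q r s) ^ 2)

noncomputable def pd1 (g : ℝ × ℝ → ℝ) : ℝ × ℝ → ℝ := fun q => fderiv ℝ g q (1, 0)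
noncomputable def pd2 (g : ℝ × ℝ → ℝ) : ℝ × ℝ → ℝ := fun q => fderiv ℝ g q (0, 1)

def Fof (Q : ℝ → ℝ → ℝ) : ℝ × ℝ → ℝ := fun q => Q q.1 q.2

lemma pd_line1 (g : ℝ × ℝ → ℝ) {r s : ℝ} (h : DifferentiableAt ℝ g (r, s)) :
    HasDerivAt (fun t => g (t, s)) (pd1 g (r, s)) r := by
  have hline : HasDerivAt (fun t : ℝ => (t, s)) ((1 : ℝ), (0 : ℝ)) r :=
    (hasDerivAt_id r).prodMk (hasDerivAt_const r s)
  simpa [Function.comp_def, pd1] using h.hasFDerivAt.comp_hasDerivAt r hline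

lemma pd_line2 (g : ℝ × ℝ → ℝ) {r s : ℝ} (h : DifferentiableAt ℝ g (r, s)) :
    HasDerivAt (fun t => g (r, t)) (pd2 g (r, s)) s := by
  have hline : HasDerivAt (fun t : ℝ => (r, t)) ((0 : ℝ), (1 : ℝ)) s :=
    (hasDerivAt_const s r).prodMk (hasDerivAt_id' (x := s))
  simpa [Function.comp_def, pd2] using h.hasFDerivAt.comp_hasDerivAt s hline

lemma contDiffOn_pd1 {U : Set (ℝ × ℝ)} (hU : IsOpen U) {g : ℝ × ℝ → ℝ}
    (hg : ContDiffOn ℝ (⊤ : ℕ∞) g U) : ContDiffOn ℝ (⊤ : ℕ∞) (pd1 g) U :=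
  (hg.fderiv_of_isOpen hU (by simp)).clm_apply contDiffOn_const

lemma contDiffOn_pd2 {U : Set (ℝ × ℝ)} (hU : IsOpen U) {g : ℝ × ℝ → ℝ}
    (hg : ContDiffOn ℝ (⊤ : ℕ∞) g U) : ContDiffOn ℝ (⊤ : ℕ∞) (pd2 g) U :=
  (hg.fderiv_of_isOpen hU (by simp)).clm_apply contDiffOn_const

lemma pd_diffAt {U : Set (ℝ × ℝ)} (hU : IsOpen U) {g : ℝ × ℝ → ℝ}
    (hg : ContDiffOn ℝ (⊤ : ℕ∞) g U) {p : ℝ × ℝ} (hp : p ∈ U) : DifferentiableAt ℝ g p :=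
  (hg.contDiffAt (hU.mem_nhds hp)).differentiableAt (by simp)

lemma pd_symm {U : Set (ℝ × ℝ)} (hU : IsOpen U) {g : ℝ × ℝ → ℝ}
    (hg : ContDiffOn ℝ (⊤ : ℕ∞) g U) {p : ℝ × ℝ} (hp : p ∈ U) :
    pd2 (pd1 g) p = pd1 (pd2 g) p := by
  have hd : DifferentiableAt ℝ (fderiv ℝ g) p :=
    ((hg.fderiv_of_isOpen (m := 1) hU (WithTop.coe_le_coe.mpr le_top)).contDiffAt (hU.mem_nhds hp)).differentiableAt (by simp)
  have hsym : IsSymmSndFDerivAt ℝ g p :=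
    (hg.contDiffAt (hU.mem_nhds hp)).isSymmSndFDerivAt (by rw [minSmoothness_of_isRCLikeNormedField]; exact WithTop.coe_le_coe.mpr le_top)
  have h1 : pd2 (pd1 g) p = fderiv ℝ (fderiv ℝ g) p (0, 1) (1, 0) := by
    show fderiv ℝ (fun q => fderiv ℝ g q (1, 0)) p (0, 1) = _
    rw [fderiv_clm_apply hd (differentiableAt_const _)]
    simp
  have h2 : pd1 (pd2 g) p = fderiv ℝ (fderiv ℝ g) p (1, 0) (0, 1) := by
    show fderiv ℝ (fun q => fderiv ℝ g q (0, 1)) p (1, 0) = _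
    rw [fderiv_clm_apply hd (differentiableAt_const _)]
    simp
  rw [h1, h2, hsym.eq]


/-- If `R₂ ≡ 0` on `U`, then `ψ := (r² − s²)^{3/2}·(Q_s − s·Q_ss)` satisfies
`s·ψ_r + (1 − 2(r² − s²)Q)·r·ψ_s = 0` on `U`. -/
theorem stmt_1
    (U : Set (ℝ × ℝ)) (hU : IsOpen U)
    (hUsub : U ⊆ {p : ℝ × ℝ | 0 < p.2 ∧ p.2 < p.1})
    (Q : ℝ → ℝ → ℝ) (hQ : ContDiffOn ℝ (⊤ : ℕ∞) (fun p : ℝ × ℝ => Q p.1 p.2) U)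
    (hR2 : ∀ p ∈ U, R2 Q p.1 p.2 = 0)
    (ψ : ℝ → ℝ → ℝ)
    (hψ : ∀ r s : ℝ, ψ r s =
      (r ^ 2 - s ^ 2) ^ ((3 : ℝ) / 2) *
        (pderivS Q r s - s * pderivS (pderivS Q) r s)) :
    ∀ p ∈ U, p.2 * pderivR ψ p.1 p.2
      + (1 - 2 * (p.1 ^ 2 - p.2 ^ 2) * Q p.1 p.2) * p.1 * pderivS ψ p.1 p.2 = 0 := by
  intro p hp
  obtain ⟨r, s⟩ := p
  obtain ⟨hs0, hsr⟩ := hUsub hp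
  simp only at hs0 hsr ⊢
  have hr0 : (0:ℝ) < r := lt_trans hs0 hsr
  have hrne : r ≠ 0 := ne_of_gt hr0
  have hD : (0:ℝ) < r ^ 2 - s ^ 2 := by nlinarith
  have hF : ContDiffOn ℝ (⊤ : ℕ∞) (Fof Q) U := hQ
  have hG1 : ContDiffOn ℝ (⊤ : ℕ∞) (pd1 (Fof Q)) U := contDiffOn_pd1 hU hF
  have hG2 : ContDiffOn ℝ (⊤ : ℕ∞) (pd2 (Fof Q)) U := contDiffOn_pd2 hU hF
  have hG21 : ContDiffOn ℝ (⊤ : ℕ∞) (pd1 (pd2 (Fof Q))) U := contDiffOn_pd1 hU hG2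
  have hG22 : ContDiffOn ℝ (⊤ : ℕ∞) (pd2 (pd2 (Fof Q))) U := contDiffOn_pd2 hU hG2
  have hnbS : ∀ a b : ℝ, (a, b) ∈ U → ∀ᶠ t in nhds b, (a, t) ∈ U := by
    intro a b h
    have hc : ContinuousAt (fun t : ℝ => (a, t)) b :=
      (continuous_const.prodMk continuous_id).continuousAt
    exact hc.preimage_mem_nhds (hU.mem_nhds h)
  have hnbR : ∀ a b : ℝ, (a, b) ∈ U → ∀ᶠ t in nhds a, (t, b) ∈ U := by
    intro a b h
    have hc : ContinuousAt (fun t : ℝ => (t, b)) a :=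
      (continuous_id.prodMk continuous_const).continuousAt
    exact hc.preimage_mem_nhds (hU.mem_nhds h)
  have idS : ∀ a b : ℝ, (a, b) ∈ U → pderivS Q a b = pd2 (Fof Q) (a, b) := by
    intro a b h
    exact (pd_line2 (Fof Q) (pd_diffAt hU hF h)).deriv
  have idR : ∀ a b : ℝ, (a, b) ∈ U → pderivR Q a b = pd1 (Fof Q) (a, b) := by
    intro a b h
    exact (pd_line1 (Fof Q) (pd_diffAt hU hF h)).deriv
  have idSS : ∀ a b : ℝ, (a, b) ∈ U →
      pderivS (pderivS Q) a b = pd2 (pd2 (Fof Q)) (a, b) := by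
    intro a b h
    have hev : (fun t => pderivS Q a t) =ᶠ[nhds b] (fun t => pd2 (Fof Q) (a, t)) := by
      filter_upwards [hnbS a b h] with t ht
      exact idS a t ht
    show deriv (fun t => pderivS Q a t) b = _
    rw [hev.deriv_eq]
    exact (pd_line2 (pd2 (Fof Q)) (pd_diffAt hU hG2 h)).deriv
  have idRS : ∀ a b : ℝ, (a, b) ∈ U →
      pderivR (pderivS Q) a b = pd1 (pd2 (Fof Q)) (a, b) := by
    intro a b h
    have hev : (fun t => pderivS Q t b) =ᶠ[nhds a] (fun t => pd2 (Fof Q) (t, b)) := by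
      filter_upwards [hnbR a b h] with t ht
      exact idS t b ht
    show deriv (fun t => pderivS Q t b) a = _
    rw [hev.deriv_eq]
    exact (pd_line1 (pd2 (Fof Q)) (pd_diffAt hU hG2 h)).deriv
  -- abbreviations
  set q := Fof Q (r, s) with hq
  set qs := pd2 (Fof Q) (r, s) with hqs
  set qrs := pd1 (pd2 (Fof Q)) (r, s) with hqrs
  set qss := pd2 (pd2 (Fof Q)) (r, s) with hqss
  set g1s := pd2 (pd1 (Fof Q)) (r, s) with hg1s
  set t1 := pd2 (pd1 (pd2 (Fof Q))) (r, s) with ht1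
  set t2 := pd1 (pd2 (pd2 (Fof Q))) (r, s) with ht2
  set t3 := pd2 (pd2 (pd2 (Fof Q))) (r, s) with ht3
  -- the R2 function along the vertical line, vanishing near s
  have hRz : (fun t => 2 * Fof Q (r, t) * (2 * Fof Q (r, t) - t * pd2 (Fof Q) (r, t))
        + (1 / r) * (2 * pd1 (Fof Q) (r, t) - t * pd1 (pd2 (Fof Q)) (r, t)
            - r * pd2 (pd2 (Fof Q)) (r, t))
        + (r ^ 2 - t ^ 2) * (2 * Fof Q (r, t) * pd2 (pd2 (Fof Q)) (r, t)
            - (pd2 (Fof Q) (r, t)) ^ 2)) =ᶠ[nhds s] (fun _ => (0 : ℝ)) := by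
    filter_upwards [hnbS r s hp] with t ht
    have h0 := hR2 (r, t) ht
    rw [R2] at h0
    simp only at h0
    rw [idS r t ht, idR r t ht, idSS r t ht, idRS r t ht] at h0
    exact h0
  have hFl := pd_line2 (Fof Q) (pd_diffAt hU hF hp)
  have hG1l := pd_line2 (pd1 (Fof Q)) (pd_diffAt hU hG1 hp)
  have hG2l := pd_line2 (pd2 (Fof Q)) (pd_diffAt hU hG2 hp)
  have hG21l := pd_line2 (pd1 (pd2 (Fof Q))) (pd_diffAt hU hG21 hp)
  have hG22l := pd_line2 (pd2 (pd2 (Fof Q))) (pd_diffAt hU hG22 hp)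
  have hder : HasDerivAt (fun t => 2 * Fof Q (r, t) * (2 * Fof Q (r, t) - t * pd2 (Fof Q) (r, t))
        + (1 / r) * (2 * pd1 (Fof Q) (r, t) - t * pd1 (pd2 (Fof Q)) (r, t)
            - r * pd2 (pd2 (Fof Q)) (r, t))
        + (r ^ 2 - t ^ 2) * (2 * Fof Q (r, t) * pd2 (pd2 (Fof Q)) (r, t)
            - (pd2 (Fof Q) (r, t)) ^ 2))
      (2 * qs * (2 * q - s * qs) + 2 * q * (2 * qs - (qs + s * qss))
        + (1 / r) * (2 * g1s - (qrs + s * t1) - r * t3)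
        + ((-(2 * s)) * (2 * q * qss - qs ^ 2)
            + (r ^ 2 - s ^ 2) * ((2 * qs * qss + 2 * q * t3) - 2 * qs * qss))) s := by
    have hA := (hFl.const_mul 2).fun_mul ((hFl.const_mul 2).fun_sub ((hasDerivAt_id' (x := s)).fun_mul hG2l))
    have hB := ((((hG1l.const_mul 2).fun_sub ((hasDerivAt_id' (x := s)).fun_mul hG21l)).fun_sub
        (hG22l.const_mul r)).const_mul (1 / r))
    have hpow : HasDerivAt (fun t : ℝ => r ^ 2 - t ^ 2) (-(2 * s)) s := by
      simpa using (hasDerivAt_pow 2 s).const_sub (r ^ 2)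
    have hC := hpow.fun_mul (((hFl.const_mul 2).fun_mul hG22l).fun_sub (hG2l.fun_pow 2))
    have := (hA.fun_add hB).fun_add hC
    refine this.congr_deriv ?_
    norm_num
    try ring
  have E1 : 2 * qs * (2 * q - s * qs) + 2 * q * (2 * qs - (qs + s * qss))
        + (1 / r) * (2 * g1s - (qrs + s * t1) - r * t3)
        + ((-(2 * s)) * (2 * q * qss - qs ^ 2)
            + (r ^ 2 - s ^ 2) * ((2 * qs * qss + 2 * q * t3) - 2 * qs * qss)) = 0 := by
    rw [← hder.deriv, hRz.deriv_eq, deriv_const]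
  have E2 : r * (2 * qs * (2 * q - s * qs) + 2 * q * (2 * qs - (qs + s * qss)))
        + (2 * g1s - (qrs + s * t1) - r * t3)
        + r * ((-(2 * s)) * (2 * q * qss - qs ^ 2)
            + (r ^ 2 - s ^ 2) * ((2 * qs * qss + 2 * q * t3) - 2 * qs * qss)) = 0 := by
    have h : r * (2 * qs * (2 * q - s * qs) + 2 * q * (2 * qs - (qs + s * qss)))
        + (2 * g1s - (qrs + s * t1) - r * t3)
        + r * ((-(2 * s)) * (2 * q * qss - qs ^ 2)
            + (r ^ 2 - s ^ 2) * ((2 * qs * qss + 2 * q * t3) - 2 * qs * qss))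
        = r * (2 * qs * (2 * q - s * qs) + 2 * q * (2 * qs - (qs + s * qss))
        + (1 / r) * (2 * g1s - (qrs + s * t1) - r * t3)
        + ((-(2 * s)) * (2 * q * qss - qs ^ 2)
            + (r ^ 2 - s ^ 2) * ((2 * qs * qss + 2 * q * t3) - 2 * qs * qss))) := by
      field_simp
    rw [h, E1, mul_zero]
  -- derivatives of ψ
  have hψr : pderivR ψ r s = ((3:ℝ)/2) * (r ^ 2 - s ^ 2) ^ ((1:ℝ)/2) * (2 * r) * (qs - s * qss)
      + (r ^ 2 - s ^ 2) ^ ((3:ℝ)/2) * (qrs - s * t2) := by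
    have hev : (fun t => ψ t s) =ᶠ[nhds r]
        (fun t => (t ^ 2 - s ^ 2) ^ ((3:ℝ)/2)
          * (pd2 (Fof Q) (t, s) - s * pd2 (pd2 (Fof Q)) (t, s))) := by
      filter_upwards [hnbR r s hp] with t ht
      rw [hψ t s, idS t s ht, idSS t s ht]
    show deriv (fun t => ψ t s) r = _
    rw [hev.deriv_eq]
    have h1 : HasDerivAt (fun t : ℝ => t ^ 2 - s ^ 2) (2 * r) r := by
      simpa using (hasDerivAt_pow 2 r).sub_const (s ^ 2)
    have h2 : HasDerivAt (fun x : ℝ => x ^ ((3:ℝ)/2))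
        (((3:ℝ)/2) * (r ^ 2 - s ^ 2) ^ ((1:ℝ)/2)) (r ^ 2 - s ^ 2) := by
      have h := Real.hasDerivAt_rpow_const (x := r ^ 2 - s ^ 2) (p := (3:ℝ)/2)
        (Or.inl (ne_of_gt hD))
      rw [show (3:ℝ)/2 - 1 = (1:ℝ)/2 by norm_num] at h
      exact h
    have h3 : HasDerivAt (fun t : ℝ => (t ^ 2 - s ^ 2) ^ ((3:ℝ)/2))
        (((3:ℝ)/2) * (r ^ 2 - s ^ 2) ^ ((1:ℝ)/2) * (2 * r)) r := by
      simpa [Function.comp_def] using h2.comp r h1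
    have h4 := pd_line1 (pd2 (Fof Q)) (pd_diffAt hU hG2 hp)
    have h5 := pd_line1 (pd2 (pd2 (Fof Q))) (pd_diffAt hU hG22 hp)
    have h6 := h3.fun_mul (h4.fun_sub (h5.const_mul s))
    rw [h6.deriv]
    try ring
  have hψs : pderivS ψ r s = ((3:ℝ)/2) * (r ^ 2 - s ^ 2) ^ ((1:ℝ)/2) * (-(2 * s)) * (qs - s * qss)
      + (r ^ 2 - s ^ 2) ^ ((3:ℝ)/2) * (qss - (qss + s * t3)) := by
    have hev : (fun t => ψ r t) =ᶠ[nhds s]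
        (fun t => (r ^ 2 - t ^ 2) ^ ((3:ℝ)/2)
          * (pd2 (Fof Q) (r, t) - t * pd2 (pd2 (Fof Q)) (r, t))) := by
      filter_upwards [hnbS r s hp] with t ht
      rw [hψ r t, idS r t ht, idSS r t ht]
    show deriv (fun t => ψ r t) s = _
    rw [hev.deriv_eq]
    have h1 : HasDerivAt (fun t : ℝ => r ^ 2 - t ^ 2) (-(2 * s)) s := by
      simpa using (hasDerivAt_pow 2 s).const_sub (r ^ 2)
    have h2 : HasDerivAt (fun x : ℝ => x ^ ((3:ℝ)/2))
        (((3:ℝ)/2) * (r ^ 2 - s ^ 2) ^ ((1:ℝ)/2)) (r ^ 2 - s ^ 2) := by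
      have h := Real.hasDerivAt_rpow_const (x := r ^ 2 - s ^ 2) (p := (3:ℝ)/2)
        (Or.inl (ne_of_gt hD))
      rw [show (3:ℝ)/2 - 1 = (1:ℝ)/2 by norm_num] at h
      exact h
    have h3 : HasDerivAt (fun t : ℝ => (r ^ 2 - t ^ 2) ^ ((3:ℝ)/2))
        (((3:ℝ)/2) * (r ^ 2 - s ^ 2) ^ ((1:ℝ)/2) * (-(2 * s))) s := by
      simpa [Function.comp_def] using h2.comp s h1
    have h6 := h3.fun_mul (hG2l.fun_sub ((hasDerivAt_id' (x := s)).fun_mul hG22l))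
    rw [h6.deriv]
    try ring
  have sym1 : g1s = qrs := pd_symm hU hF hp
  have sym2 : t1 = t2 := pd_symm hU hG2 hp
  have hQq : Q r s = q := rfl
  have hD32 : (r ^ 2 - s ^ 2) ^ ((3:ℝ)/2)
      = (r ^ 2 - s ^ 2) * (r ^ 2 - s ^ 2) ^ ((1:ℝ)/2) := by
    rw [show ((3:ℝ)/2) = 1 + (1:ℝ)/2 by norm_num, Real.rpow_add hD, Real.rpow_one]
  rw [hψr, hψs, hQq, hD32]
  rw [sym1, sym2] at E2
  set X := (r ^ 2 - s ^ 2) ^ ((1:ℝ)/2) with hX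
  linear_combination (s * (r ^ 2 - s ^ 2) * X) * E2
end

section
/- Fix k ∈ ℝ and let c₁, c₂ be smooth real functions on an open interval I ⊆ (0,∞). Then the function Q(r,s) := k·s·√(r² − s²)/r⁴ + c₁(r)·s²/2 + c₂(r), defined on {(r,s) : r ∈ I, 0 < s < r}, satisfies (r² − s²)^{3/2}·(Q_s(r,s) − s·Q_ss(r,s)) = k at every point of its domain. -/
/-- `Q(r,s) := k·s·√(r² − s²)/r⁴ + c₁(r)·s²/2 + c₂(r)` satisfies
`(r² − s²)^{3/2}·(Q_s − s·Q_ss) = k` on `{(r,s) : r ∈ I, 0 < s < r}`. -/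
theorem stmt_2 (k : ℝ) (I : Set ℝ) (hI : ∃ a b : ℝ, I = Set.Ioo a b)
    (hIpos : I ⊆ Set.Ioi (0 : ℝ))
    (c₁ c₂ : ℝ → ℝ) (hc₁ : ContDiffOn ℝ (⊤ : ℕ∞) c₁ I) (hc₂ : ContDiffOn ℝ (⊤ : ℕ∞) c₂ I)
    (Q : ℝ → ℝ → ℝ)
    (hQ : ∀ r s : ℝ, Q r s =
      k * s * Real.sqrt (r ^ 2 - s ^ 2) / r ^ 4 + c₁ r * s ^ 2 / 2 + c₂ r) :
    ∀ r ∈ I, ∀ s : ℝ, 0 < s → s < r →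
      (r ^ 2 - s ^ 2) ^ ((3 : ℝ) / 2) *
        (pderivS Q r s - s * pderivS (pderivS Q) r s) = k := by
  intro r hr s hs hsr
  have hrpos : 0 < r := hIpos hr
  have hr4 : (r : ℝ) ^ 4 ≠ 0 := by positivity
  have hQF : (fun t => Q r t) =
      fun t => k * t * Real.sqrt (r ^ 2 - t ^ 2) / r ^ 4 + c₁ r * t ^ 2 / 2 + c₂ r :=
    funext fun t => hQ r t
  -- first derivative on Ioo (-r) r
  have key1 : ∀ t ∈ Set.Ioo (-r) r,
      HasDerivAt (fun x => Q r x)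
        (k * (r ^ 2 - 2 * t ^ 2) / (Real.sqrt (r ^ 2 - t ^ 2) * r ^ 4) + c₁ r * t) t := by
    intro t ht
    have hpos : 0 < r ^ 2 - t ^ 2 := by nlinarith [ht.1, ht.2]
    have hw : 0 < Real.sqrt (r ^ 2 - t ^ 2) := Real.sqrt_pos.mpr hpos
    have hw2 : Real.sqrt (r ^ 2 - t ^ 2) ^ 2 = r ^ 2 - t ^ 2 := Real.sq_sqrt hpos.le
    have h1 : HasDerivAt (fun x : ℝ => r ^ 2 - x ^ 2) (-(2 * t)) t := by
      exact ((hasDerivAt_pow 2 t).const_sub (r ^ 2)).congr_deriv (by norm_num)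
    have h2 : HasDerivAt (fun x : ℝ => Real.sqrt (r ^ 2 - x ^ 2))
        (1 / (2 * Real.sqrt (r ^ 2 - t ^ 2)) * (-(2 * t))) t :=
      (Real.hasDerivAt_sqrt hpos.ne').comp t h1
    have h3 : HasDerivAt (fun x : ℝ => k * x) k t := by
      simpa using (hasDerivAt_id t).const_mul k
    have h4 := (h3.mul h2).div_const (r ^ 4)
    have h5 : HasDerivAt (fun x : ℝ => c₁ r * x ^ 2 / 2) (c₁ r * t) t := by
      have := ((hasDerivAt_pow 2 t).const_mul (c₁ r)).div_const 2
      exact this.congr_deriv (by rw [Nat.cast_ofNat, show 2 - 1 = 1 from rfl, pow_one]; ring)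
    have h6 := (h4.add h5).add_const (c₂ r)
    rw [hQF]
    refine h6.congr_deriv ?_
    field_simp
    linear_combination k * hw2
  have hmem1 : -r < s := by linarith
  have hopen : Set.Ioo (-r) r ∈ nhds s := Ioo_mem_nhds hmem1 hsr
  have heq1 : (fun t => pderivS Q r t) =ᶠ[nhds s]
      fun t => k * (r ^ 2 - 2 * t ^ 2) / (Real.sqrt (r ^ 2 - t ^ 2) * r ^ 4) + c₁ r * t := by
    filter_upwards [hopen] with t ht
    exact (key1 t ht).deriv
  -- data at the point s
  have hpos : 0 < r ^ 2 - s ^ 2 := by nlinarith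
  have hw : 0 < Real.sqrt (r ^ 2 - s ^ 2) := Real.sqrt_pos.mpr hpos
  have hw2 : Real.sqrt (r ^ 2 - s ^ 2) ^ 2 = r ^ 2 - s ^ 2 := Real.sq_sqrt hpos.le
  set w : ℝ := Real.sqrt (r ^ 2 - s ^ 2) with hwdef
  -- second derivative
  have h1 : HasDerivAt (fun x : ℝ => r ^ 2 - x ^ 2) (-(2 * s)) s := by
    exact ((hasDerivAt_pow 2 s).const_sub (r ^ 2)).congr_deriv (by norm_num)
  have h2 : HasDerivAt (fun x : ℝ => Real.sqrt (r ^ 2 - x ^ 2))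
      (1 / (2 * w) * (-(2 * s))) s :=
    (Real.hasDerivAt_sqrt hpos.ne').comp s h1
  have hnum : HasDerivAt (fun x : ℝ => k * (r ^ 2 - 2 * x ^ 2)) (k * (-(2 * (2 * s)))) s := by
    have : HasDerivAt (fun x : ℝ => r ^ 2 - 2 * x ^ 2) (-(2 * (2 * s))) s := by
      have := (hasDerivAt_const s (r ^ 2)).sub ((hasDerivAt_pow 2 s).const_mul 2)
      exact this.congr_deriv (by rw [Nat.cast_ofNat, show 2 - 1 = 1 from rfl, pow_one]; ring)
    exact this.const_mul k
  have hden : HasDerivAt (fun x : ℝ => Real.sqrt (r ^ 2 - x ^ 2) * r ^ 4)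
      (1 / (2 * w) * (-(2 * s)) * r ^ 4) s := h2.mul_const (r ^ 4)
  have hdenne : w * r ^ 4 ≠ 0 := by positivity
  have hlin : HasDerivAt (fun x : ℝ => c₁ r * x) (c₁ r) s := by
    simpa using (hasDerivAt_id s).const_mul (c₁ r)
  have hg : HasDerivAt
      (fun t => k * (r ^ 2 - 2 * t ^ 2) / (Real.sqrt (r ^ 2 - t ^ 2) * r ^ 4) + c₁ r * t)
      ((k * (-(2 * (2 * s))) * (w * r ^ 4) -
          k * (r ^ 2 - 2 * s ^ 2) * (1 / (2 * w) * (-(2 * s)) * r ^ 4)) / (w * r ^ 4) ^ 2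
        + c₁ r) s := (hnum.div hden hdenne).add hlin
  have hQs : pderivS Q r s = k * (r ^ 2 - 2 * s ^ 2) / (w * r ^ 4) + c₁ r * s :=
    (key1 s ⟨hmem1, hsr⟩).deriv
  have hQss : pderivS (pderivS Q) r s =
      (k * (-(2 * (2 * s))) * (w * r ^ 4) -
          k * (r ^ 2 - 2 * s ^ 2) * (1 / (2 * w) * (-(2 * s)) * r ^ 4)) / (w * r ^ 4) ^ 2
        + c₁ r := by
    have := heq1.deriv_eq
    rw [pderivS, this] at *
    exact hg.deriv
  have hrpow : (r ^ 2 - s ^ 2) ^ ((3 : ℝ) / 2) = w ^ 3 := by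
    rw [show (3 : ℝ) / 2 = 1 + 1 / 2 by norm_num, Real.rpow_add hpos, Real.rpow_one,
      ← Real.sqrt_eq_rpow, ← hwdef, ← hw2]
    ring
  rw [hrpow, hQs, hQss]
  have hwne : w ≠ 0 := hw.ne'
  field_simp
  linear_combination (k * (r ^ 2 + 2 * s ^ 2)) * hw2
end

section
/- Fix k ∈ ℝ and let Q be a smooth function on D = {(r,s) : r ∈ I, 0 < s < r}, where I ⊆ (0,∞) is an open interval, satisfying (r² − s²)^{3/2}·(Q_s(r,s) − s·Q_ss(r,s)) = k on all of D. Then there exist smooth functions c₁, c₂ : I → ℝ such that Q(r,s) = k·s·√(r² − s²)/r⁴ + c₁(r)·s²/2 + c₂(r) for all (r,s) ∈ D. -/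
open Set

lemma const_of_hasDerivAt_zero {a b : ℝ} {h : ℝ → ℝ}
    (hd : ∀ x ∈ Ioo a b, HasDerivAt h 0 x) {x y : ℝ}
    (hx : x ∈ Ioo a b) (hy : y ∈ Ioo a b) : h x = h y := by
  apply (convex_Ioo a b).is_const_of_fderivWithin_eq_zero
    (fun z hz => (hd z hz).differentiableAt.differentiableWithinAt) ?_ hx hy
  intro z hz
  rw [fderivWithin_of_isOpen isOpen_Ioo hz, (hd z hz).hasFDerivAt.fderiv]
  ext
  simp

lemma sqrt_hasDerivAt {r s : ℝ} (hx : 0 < r ^ 2 - s ^ 2) :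
    HasDerivAt (fun t => Real.sqrt (r ^ 2 - t ^ 2)) (-s / Real.sqrt (r ^ 2 - s ^ 2)) s := by
  have h1 : HasDerivAt (fun t : ℝ => r ^ 2 - t ^ 2) (-(2 * s)) s := by
    simpa using ((hasDerivAt_pow 2 s).const_sub (r ^ 2))
  have h2 := (Real.hasDerivAt_sqrt hx.ne').comp s h1
  refine h2.congr_deriv (Eq.symm ?_)
  have hs : Real.sqrt (r ^ 2 - s ^ 2) ≠ 0 := by positivity
  field_simp

lemma P_hasDerivAt {k r s : ℝ} (hr : 0 < r) (hx : 0 < r ^ 2 - s ^ 2) :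
    HasDerivAt (fun t => k * t * Real.sqrt (r ^ 2 - t ^ 2) / r ^ 4)
      (k * (r ^ 2 - 2 * s ^ 2) / (r ^ 4 * Real.sqrt (r ^ 2 - s ^ 2))) s := by
  have hs : Real.sqrt (r ^ 2 - s ^ 2) ≠ 0 := by positivity
  have hsq : Real.sqrt (r ^ 2 - s ^ 2) * Real.sqrt (r ^ 2 - s ^ 2) = r ^ 2 - s ^ 2 :=
    Real.mul_self_sqrt hx.le
  have h1 : HasDerivAt (fun t : ℝ => k * t) k s := by
    simpa using (hasDerivAt_id s).const_mul k
  have h2 := (h1.mul (sqrt_hasDerivAt hx)).div_const (r ^ 4)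
  refine h2.congr_deriv (Eq.symm ?_)
  field_simp
  linear_combination (-k) * hsq

lemma P1_hasDerivAt {k r s : ℝ} (hr : 0 < r) (hx : 0 < r ^ 2 - s ^ 2) :
    HasDerivAt (fun t => k * (r ^ 2 - 2 * t ^ 2) / (r ^ 4 * Real.sqrt (r ^ 2 - t ^ 2)))
      (k * s * (2 * s ^ 2 - 3 * r ^ 2) /
        (r ^ 4 * ((r ^ 2 - s ^ 2) * Real.sqrt (r ^ 2 - s ^ 2)))) s := by
  have hs : Real.sqrt (r ^ 2 - s ^ 2) ≠ 0 := by positivity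
  have hsq : Real.sqrt (r ^ 2 - s ^ 2) * Real.sqrt (r ^ 2 - s ^ 2) = r ^ 2 - s ^ 2 :=
    Real.mul_self_sqrt hx.le
  have h1 : HasDerivAt (fun t : ℝ => k * (r ^ 2 - 2 * t ^ 2)) (k * (-(4 * s))) s := by
    have := ((hasDerivAt_pow 2 s).const_mul (2 : ℝ)).const_sub (r ^ 2)
    have := this.const_mul k
    refine this.congr_deriv (Eq.symm ?_)
    push_cast
    ring
  have h2 : HasDerivAt (fun t : ℝ => r ^ 4 * Real.sqrt (r ^ 2 - t ^ 2))
      (r ^ 4 * (-s / Real.sqrt (r ^ 2 - s ^ 2))) s := (sqrt_hasDerivAt hx).const_mul (r ^ 4)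
  have hden : r ^ 4 * Real.sqrt (r ^ 2 - s ^ 2) ≠ 0 := by positivity
  have h3 := h1.div h2 hden
  refine h3.congr_deriv (Eq.symm ?_)
  field_simp
  linear_combination (k * s * (r ^ 2 - 2 * s ^ 2)) * hsq

lemma pderivS_eq_fderiv {Q : ℝ → ℝ → ℝ} {U : Set (ℝ × ℝ)} (hU : IsOpen U)
    (hQ : DifferentiableOn ℝ (fun p : ℝ × ℝ => Q p.1 p.2) U) {p : ℝ × ℝ} (hp : p ∈ U) :
    pderivS Q p.1 p.2 = fderiv ℝ (fun p : ℝ × ℝ => Q p.1 p.2) p ((0 : ℝ), (1 : ℝ)) := by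
  have hdiff : DifferentiableAt ℝ (fun p : ℝ × ℝ => Q p.1 p.2) p :=
    (hQ p hp).differentiableAt (hU.mem_nhds hp)
  have hline : HasDerivAt (fun t : ℝ => (p.1, t)) ((0 : ℝ), (1 : ℝ)) p.2 :=
    HasDerivAt.prodMk (hasDerivAt_const p.2 p.1) (hasDerivAt_id p.2)
  have hcomp := hdiff.hasFDerivAt.comp_hasDerivAt p.2 (by simpa using hline)
  simpa [pderivS, Function.comp_def] using hcomp.deriv

lemma pderivS_contDiffOn {Q : ℝ → ℝ → ℝ} {U : Set (ℝ × ℝ)} (hU : IsOpen U)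
    (hQ : ContDiffOn ℝ (⊤ : ℕ∞) (fun p : ℝ × ℝ => Q p.1 p.2) U) :
    ContDiffOn ℝ (⊤ : ℕ∞) (fun p : ℝ × ℝ => pderivS Q p.1 p.2) U := by
  have hfd : ContDiffOn ℝ (⊤ : ℕ∞) (fderiv ℝ (fun p : ℝ × ℝ => Q p.1 p.2)) U :=
    hQ.fderiv_of_isOpen hU (by simp)
  have happ : ContDiff ℝ (⊤ : ℕ∞) (fun L : ℝ × ℝ →L[ℝ] ℝ => L ((0 : ℝ), (1 : ℝ))) :=
    (ContinuousLinearMap.apply ℝ ℝ ((0 : ℝ), (1 : ℝ))).contDiff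
  exact (happ.comp_contDiffOn hfd).congr fun p hp =>
    pderivS_eq_fderiv hU (hQ.differentiableOn (by simp)) hp

/-- Any smooth `Q` on `D = {(r,s) : r ∈ I, 0 < s < r}` solving
`(r² − s²)^{3/2}·(Q_s − s·Q_ss) = k` has the form
`Q(r,s) = k·s·√(r² − s²)/r⁴ + c₁(r)·s²/2 + c₂(r)` for smooth `c₁, c₂ : I → ℝ`. -/
theorem stmt_3 (k : ℝ) (I : Set ℝ) (hI : ∃ a b : ℝ, I = Set.Ioo a b)
    (hIpos : I ⊆ Set.Ioi (0 : ℝ))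
    (Q : ℝ → ℝ → ℝ)
    (hQ : ContDiffOn ℝ (⊤ : ℕ∞) (fun p : ℝ × ℝ => Q p.1 p.2)
      {p : ℝ × ℝ | p.1 ∈ I ∧ 0 < p.2 ∧ p.2 < p.1})
    (heq : ∀ r ∈ I, ∀ s : ℝ, 0 < s → s < r →
      (r ^ 2 - s ^ 2) ^ ((3 : ℝ) / 2) *
        (pderivS Q r s - s * pderivS (pderivS Q) r s) = k) :
    ∃ c₁ c₂ : ℝ → ℝ, ContDiffOn ℝ (⊤ : ℕ∞) c₁ I ∧ ContDiffOn ℝ (⊤ : ℕ∞) c₂ I ∧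
      ∀ r ∈ I, ∀ s : ℝ, 0 < s → s < r →
        Q r s = k * s * Real.sqrt (r ^ 2 - s ^ 2) / r ^ 4
          + c₁ r * s ^ 2 / 2 + c₂ r := by
  obtain ⟨a, b, hIab⟩ := hI
  have hIopen : IsOpen I := hIab ▸ isOpen_Ioo
  set U : Set (ℝ × ℝ) := {p : ℝ × ℝ | p.1 ∈ I ∧ 0 < p.2 ∧ p.2 < p.1} with hUdef
  have hUopen : IsOpen U := by
    have h1 : IsOpen {p : ℝ × ℝ | p.1 ∈ I} := hIopen.preimage continuous_fst
    have h2 : IsOpen {p : ℝ × ℝ | 0 < p.2} := isOpen_lt continuous_const continuous_snd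
    have h3 : IsOpen {p : ℝ × ℝ | p.2 < p.1} := isOpen_lt continuous_snd continuous_fst
    have : U = {p : ℝ × ℝ | p.1 ∈ I} ∩ ({p : ℝ × ℝ | 0 < p.2} ∩ {p : ℝ × ℝ | p.2 < p.1}) := by
      ext p; simp [hUdef, and_assoc]
    rw [this]
    exact h1.inter (h2.inter h3)
  have hmem : ∀ r ∈ I, ∀ s : ℝ, 0 < s → s < r → ((r, s) : ℝ × ℝ) ∈ U :=
    fun r hr s hs hsr => ⟨hr, hs, hsr⟩
  have hγ : ContDiff ℝ (⊤ : ℕ∞) (fun r : ℝ => ((r, r / 2) : ℝ × ℝ)) :=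
    ContDiff.prodMk contDiff_id (contDiff_id.div_const 2)
  have hγmaps : ∀ r ∈ I, ((r, r / 2) : ℝ × ℝ) ∈ U := by
    intro r hr
    have hr0 : 0 < r := hIpos hr
    exact ⟨hr, by linarith, by linarith⟩
  -- smoothness building blocks
  have hA : ContDiffOn ℝ (⊤ : ℕ∞) (fun r => pderivS Q r (r / 2)) I :=
    (pderivS_contDiffOn hUopen hQ).comp (hγ.contDiffOn) hγmaps
  have hB : ContDiffOn ℝ (⊤ : ℕ∞) (fun r => Q r (r / 2)) I :=
    hQ.comp (hγ.contDiffOn) hγmaps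
  have hS : ContDiffOn ℝ (⊤ : ℕ∞) (fun r => Real.sqrt (r ^ 2 - (r / 2) ^ 2)) I := by
    intro r hr
    have hr0 : 0 < r := hIpos hr
    have hxpos : (0 : ℝ) < r ^ 2 - (r / 2) ^ 2 := by nlinarith
    exact (Real.contDiffAt_sqrt hxpos.ne').comp_contDiffWithinAt r
      ((contDiff_id.pow 2).sub ((contDiff_id.div_const 2).pow 2)).contDiffWithinAt
  have hr4 : ∀ r ∈ I, (r : ℝ) ^ 4 ≠ 0 := fun r hr =>
    pow_ne_zero 4 (ne_of_gt (Set.mem_Ioi.mp (hIpos hr)))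
  have hSne : ∀ r ∈ I, Real.sqrt (r ^ 2 - (r / 2) ^ 2) ≠ 0 := by
    intro r hr
    have hr0 : 0 < r := hIpos hr
    have hxpos : (0 : ℝ) < r ^ 2 - (r / 2) ^ 2 := by nlinarith
    exact (Real.sqrt_pos.mpr hxpos).ne'
  set c₁ : ℝ → ℝ := fun r =>
    (pderivS Q r (r / 2) -
      k * (r ^ 2 - 2 * (r / 2) ^ 2) / (r ^ 4 * Real.sqrt (r ^ 2 - (r / 2) ^ 2))) / (r / 2)
    with hc₁def
  set c₂ : ℝ → ℝ := fun r =>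
    Q r (r / 2) - k * (r / 2) * Real.sqrt (r ^ 2 - (r / 2) ^ 2) / r ^ 4
      - c₁ r * (r / 2) ^ 2 / 2 with hc₂def
  have hc₁smooth : ContDiffOn ℝ (⊤ : ℕ∞) c₁ I := by
    apply ContDiffOn.div
    · apply hA.sub
      apply ContDiffOn.div
      · exact (contDiff_const.mul ((contDiff_id.pow 2).sub
          (contDiff_const.mul ((contDiff_id.div_const 2).pow 2)))).contDiffOn
      · exact ((contDiff_id.pow 4).contDiffOn).mul hS
      · intro r hr
        exact mul_ne_zero (hr4 r hr) (hSne r hr)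
    · exact (contDiff_id.div_const 2).contDiffOn
    · intro r hr
      have hr0 : (0:ℝ) < r := hIpos hr
      exact div_ne_zero (ne_of_gt hr0) two_ne_zero
  have hc₂smooth : ContDiffOn ℝ (⊤ : ℕ∞) c₂ I := by
    apply ContDiffOn.sub
    · apply hB.sub
      apply ContDiffOn.div
      · exact ((contDiff_const.mul (contDiff_id.div_const 2)).contDiffOn).mul hS
      · exact (contDiff_id.pow 4).contDiffOn
      · exact hr4
    · exact (hc₁smooth.mul ((contDiff_id.div_const 2).pow 2).contDiffOn).div_const 2
  refine ⟨c₁, c₂, hc₁smooth, hc₂smooth, ?_⟩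
  intro r hrI s hs hsr
  have hr0 : 0 < r := hIpos hrI
  -- the slice function
  set f : ℝ → ℝ := fun t => Q r t with hfdef
  have hfC : ContDiffOn ℝ (⊤ : ℕ∞) f (Ioo 0 r) := by
    have hline : ContDiff ℝ (⊤ : ℕ∞) (fun t : ℝ => ((r, t) : ℝ × ℝ)) :=
      ContDiff.prodMk contDiff_const contDiff_id
    exact hQ.comp hline.contDiffOn fun t ht => ⟨hrI, ht.1, ht.2⟩
  have hf'C : ContDiffOn ℝ (⊤ : ℕ∞) (deriv f) (Ioo 0 r) :=
    hfC.deriv_of_isOpen isOpen_Ioo (by simp)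
  have hfdiff : ∀ t ∈ Ioo (0 : ℝ) r, HasDerivAt f (deriv f t) t := fun t ht =>
    (((hfC.differentiableOn (by simp)) t ht).differentiableAt
      (isOpen_Ioo.mem_nhds ht)).hasDerivAt
  have hf'diff : ∀ t ∈ Ioo (0 : ℝ) r, HasDerivAt (deriv f) (deriv (deriv f) t) t := fun t ht =>
    (((hf'C.differentiableOn (by simp)) t ht).differentiableAt
      (isOpen_Ioo.mem_nhds ht)).hasDerivAt
  -- rewrite the ODE
  have hode : ∀ t ∈ Ioo (0 : ℝ) r,
      deriv f t - t * deriv (deriv f) t =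
        k / ((r ^ 2 - t ^ 2) * Real.sqrt (r ^ 2 - t ^ 2)) := by
    intro t ht
    have hxpos : (0 : ℝ) < r ^ 2 - t ^ 2 := by nlinarith [ht.1, ht.2]
    have hx32 : (r ^ 2 - t ^ 2) ^ ((3 : ℝ) / 2) =
        (r ^ 2 - t ^ 2) * Real.sqrt (r ^ 2 - t ^ 2) := by
      rw [show (3 : ℝ) / 2 = 1 + 1 / 2 by norm_num, Real.rpow_add hxpos, Real.rpow_one,
        ← Real.sqrt_eq_rpow]
    have := heq r hrI t ht.1 ht.2
    rw [hx32] at this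
    have h1 : pderivS Q r t = deriv f t := rfl
    have h2 : pderivS (pderivS Q) r t = deriv (deriv f) t := rfl
    rw [h1, h2] at this
    have hne : (r ^ 2 - t ^ 2) * Real.sqrt (r ^ 2 - t ^ 2) ≠ 0 := by positivity
    field_simp
    linarith [this]
  -- the quotient h(t) = (f'(t) - P₁(t)) / t is constant
  set P1 : ℝ → ℝ := fun t =>
    k * (r ^ 2 - 2 * t ^ 2) / (r ^ 4 * Real.sqrt (r ^ 2 - t ^ 2)) with hP1def
  set h : ℝ → ℝ := fun t => (deriv f t - P1 t) / t with hhdef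
  have hkey : ∀ t ∈ Ioo (0 : ℝ) r,
      deriv f t - P1 t = t * (deriv (deriv f) t -
        k * t * (2 * t ^ 2 - 3 * r ^ 2) /
          (r ^ 4 * ((r ^ 2 - t ^ 2) * Real.sqrt (r ^ 2 - t ^ 2)))) := by
    intro t ht
    have hxpos : (0 : ℝ) < r ^ 2 - t ^ 2 := by nlinarith [ht.1, ht.2]
    have hsne : Real.sqrt (r ^ 2 - t ^ 2) ≠ 0 := by positivity
    have hsq : Real.sqrt (r ^ 2 - t ^ 2) * Real.sqrt (r ^ 2 - t ^ 2) = r ^ 2 - t ^ 2 :=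
      Real.mul_self_sqrt hxpos.le
    have hPid : P1 t - t * (k * t * (2 * t ^ 2 - 3 * r ^ 2) /
        (r ^ 4 * ((r ^ 2 - t ^ 2) * Real.sqrt (r ^ 2 - t ^ 2)))) =
        k / ((r ^ 2 - t ^ 2) * Real.sqrt (r ^ 2 - t ^ 2)) := by
      rw [hP1def]
      have hr4ne : (r : ℝ) ^ 4 ≠ 0 := by positivity
      field_simp
      ring
    have := hode t ht
    linarith [hPid, this]
  have hhconst : ∀ t ∈ Ioo (0 : ℝ) r, h t = h (r / 2) := by
    have hmid : r / 2 ∈ Ioo (0 : ℝ) r := ⟨by linarith, by linarith⟩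
    intro t ht
    apply const_of_hasDerivAt_zero (a := 0) (b := r) ?_ ht hmid
    intro z hz
    have hxpos : (0 : ℝ) < r ^ 2 - z ^ 2 := by nlinarith [hz.1, hz.2]
    have hnum : HasDerivAt (fun t => deriv f t - P1 t)
        (deriv (deriv f) z - k * z * (2 * z ^ 2 - 3 * r ^ 2) /
          (r ^ 4 * ((r ^ 2 - z ^ 2) * Real.sqrt (r ^ 2 - z ^ 2)))) z :=
      (hf'diff z hz).sub (P1_hasDerivAt hr0 hxpos)
    have hdiv := hnum.div (hasDerivAt_id' (x := z)) (ne_of_gt hz.1)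
    have : ((deriv (deriv f) z - k * z * (2 * z ^ 2 - 3 * r ^ 2) /
        (r ^ 4 * ((r ^ 2 - z ^ 2) * Real.sqrt (r ^ 2 - z ^ 2)))) * z -
        (deriv f z - P1 z) * 1) / z ^ 2 = 0 := by
      rw [hkey z hz]
      ring
    rw [this] at hdiv
    exact hdiv
  set C₁ : ℝ := h (r / 2) with hC₁def
  have hf'eq : ∀ t ∈ Ioo (0 : ℝ) r, deriv f t - P1 t = C₁ * t := by
    intro t ht
    have := hhconst t ht
    rw [hhdef] at this
    field_simp at this
    rw [div_eq_iff (ne_of_gt ht.1)] at this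
    linarith [this]
  -- φ is constant
  set φ : ℝ → ℝ := fun t =>
    Q r t - k * t * Real.sqrt (r ^ 2 - t ^ 2) / r ^ 4 - C₁ * t ^ 2 / 2 with hφdef
  have hφconst : ∀ t ∈ Ioo (0 : ℝ) r, φ t = φ (r / 2) := by
    have hmid : r / 2 ∈ Ioo (0 : ℝ) r := ⟨by linarith, by linarith⟩
    intro t ht
    apply const_of_hasDerivAt_zero (a := 0) (b := r) ?_ ht hmid
    intro z hz
    have hxpos : (0 : ℝ) < r ^ 2 - z ^ 2 := by nlinarith [hz.1, hz.2]
    have hC : HasDerivAt (fun t : ℝ => C₁ * t ^ 2 / 2) (C₁ * z) z := by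
      have := ((hasDerivAt_pow 2 z).const_mul C₁).div_const 2
      refine this.congr_deriv (Eq.symm ?_)
      push_cast
      ring
    have h1 := ((hfdiff z hz).sub (P_hasDerivAt (k := k) hr0 hxpos)).sub hC
    have h0 : HasDerivAt φ 0 z := by
      refine h1.congr_deriv (Eq.symm ?_)
      show (0 : ℝ) = deriv f z - P1 z - C₁ * z
      rw [hf'eq z hz]
      ring
    exact h0
  have hφs := hφconst s ⟨hs, hsr⟩
  have hc1 : c₁ r = C₁ := rfl
  have hc2 : c₂ r = φ (r / 2) := rfl
  rw [hc1, hc2, ← hφs]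
  simp only [hφdef]
  ring
end

section
/- Let φ and Q̃ be smooth functions on an open subset U of {(r,s) ∈ ℝ² : 0 < s < r} and set ψ(r,s) := √(r² − s²)·(φ(r,s) − s·φ_s(r,s)). Then the exact identity s·ψ_r + (1 − 2(r² − s²)·Q̃)·r·ψ_s = −s·√(r² − s²)·[ (r·φ_ss + s·φ_rs − φ_r) − 2r·Q̃·(φ − s·φ_s + (r² − s²)·φ_ss) ] holds on U. Consequently, φ satisfies r·φ_ss + s·φ_rs − φ_r = 2r·Q̃·(φ − s·φ_s + (r² − s²)·φ_ss) on U if and only if ψ satisfies the transport equation s·ψ_r + (1 − 2(r² − s²)Q̃)·r·ψ_s = 0 on U. -/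
/-- The key reduction identity: for `ψ := √(r² − s²)·(φ − s·φ_s)`,
`s·ψ_r + (1 − 2(r² − s²)·Q̃)·r·ψ_s
  = −s·√(r² − s²)·[(r·φ_ss + s·φ_rs − φ_r) − 2r·Q̃·(φ − s·φ_s + (r² − s²)·φ_ss)]`,
hence the geodesic equation for `φ` with coefficient `Q̃` is equivalent to the
transport equation for `ψ`. -/
theorem stmt_7
    (U : Set (ℝ × ℝ)) (hU : IsOpen U)
    (hUsub : U ⊆ {p : ℝ × ℝ | 0 < p.2 ∧ p.2 < p.1})
    (φ Qt : ℝ → ℝ → ℝ)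
    (hφ : ContDiffOn ℝ (⊤ : ℕ∞) (fun p : ℝ × ℝ => φ p.1 p.2) U)
    (hQt : ContDiffOn ℝ (⊤ : ℕ∞) (fun p : ℝ × ℝ => Qt p.1 p.2) U)
    (ψ : ℝ → ℝ → ℝ)
    (hψ : ∀ r s : ℝ, ψ r s =
      Real.sqrt (r ^ 2 - s ^ 2) * (φ r s - s * pderivS φ r s)) :
    (∀ p ∈ U,
      p.2 * pderivR ψ p.1 p.2
        + (1 - 2 * (p.1 ^ 2 - p.2 ^ 2) * Qt p.1 p.2) * p.1 * pderivS ψ p.1 p.2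
      = -p.2 * Real.sqrt (p.1 ^ 2 - p.2 ^ 2) *
          ((p.1 * pderivS (pderivS φ) p.1 p.2 + p.2 * pderivR (pderivS φ) p.1 p.2
              - pderivR φ p.1 p.2)
            - 2 * p.1 * Qt p.1 p.2 *
              (φ p.1 p.2 - p.2 * pderivS φ p.1 p.2
                + (p.1 ^ 2 - p.2 ^ 2) * pderivS (pderivS φ) p.1 p.2)))
    ∧ ((∀ p ∈ U,
          p.1 * pderivS (pderivS φ) p.1 p.2 + p.2 * pderivR (pderivS φ) p.1 p.2
              - pderivR φ p.1 p.2
            = 2 * p.1 * Qt p.1 p.2 *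
                (φ p.1 p.2 - p.2 * pderivS φ p.1 p.2
                  + (p.1 ^ 2 - p.2 ^ 2) * pderivS (pderivS φ) p.1 p.2))
        ↔ (∀ p ∈ U,
            p.2 * pderivR ψ p.1 p.2
              + (1 - 2 * (p.1 ^ 2 - p.2 ^ 2) * Qt p.1 p.2) * p.1 *
                pderivS ψ p.1 p.2 = 0)) := by
  set f : ℝ × ℝ → ℝ := fun p => φ p.1 p.2 with hfdef
  have hfat : ∀ p ∈ U, ContDiffAt ℝ (⊤ : ℕ∞) f p := fun p hp =>
    hφ.contDiffAt (hU.mem_nhds hp)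
  have hfd : ∀ p ∈ U, DifferentiableAt ℝ f p := fun p hp =>
    (hfat p hp).differentiableAt (by simp)
  set G : ℝ × ℝ → ℝ := fun p => fderiv ℝ f p (0, 1) with hGdef
  have hGd : ∀ p ∈ U, DifferentiableAt ℝ G p := fun p hp =>
    (((hfat p hp).fderiv_right (m := 1) (by exact WithTop.coe_le_coe.2 le_top)).clm_apply contDiffAt_const).differentiableAt one_ne_zero
  -- first partial derivatives
  have hSeq : ∀ p ∈ U, HasDerivAt (fun t => φ p.1 t) (G p) p.2 := by
    intro p hp
    have h1 : HasDerivAt (fun t : ℝ => ((p.1, t) : ℝ × ℝ)) (0, 1) p.2 :=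
      (hasDerivAt_const _ _).prodMk (hasDerivAt_id _)
    have h2 := (hfd p hp).hasFDerivAt.comp_hasDerivAt p.2 h1
    exact h2
  have hS_eq : ∀ p ∈ U, pderivS φ p.1 p.2 = G p := fun p hp => (hSeq p hp).deriv
  have hSd : ∀ p ∈ U, HasDerivAt (fun t => φ p.1 t) (pderivS φ p.1 p.2) p.2 := by
    intro p hp; rw [hS_eq p hp]; exact hSeq p hp
  have hRd : ∀ p ∈ U, HasDerivAt (fun t => φ t p.2) (pderivR φ p.1 p.2) p.1 := by
    intro p hp
    have h1 : HasDerivAt (fun t : ℝ => ((t, p.2) : ℝ × ℝ)) (1, 0) p.1 :=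
      (hasDerivAt_id _).prodMk (hasDerivAt_const _ _)
    have h2 := (hfd p hp).hasFDerivAt.comp_hasDerivAt p.1 h1
    have h3 : HasDerivAt (fun t => φ t p.2) (fderiv ℝ f p (1, 0)) p.1 := by
      exact h2
    exact h3.differentiableAt.hasDerivAt
  -- second partial derivatives
  have hSRd : ∀ p ∈ U, HasDerivAt (fun t => pderivS φ t p.2)
      (pderivR (pderivS φ) p.1 p.2) p.1 := by
    intro p hp
    have hev : ∀ᶠ t in nhds p.1, ((t, p.2) : ℝ × ℝ) ∈ U :=
      (Continuous.continuousAt (continuous_id.prodMk continuous_const)).preimage_mem_nhds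
        (by simpa using hU.mem_nhds hp)
    have heq : (fun t => pderivS φ t p.2) =ᶠ[nhds p.1] fun t => G (t, p.2) := by
      filter_upwards [hev] with t ht using hS_eq (t, p.2) ht
    have hGl : DifferentiableAt ℝ (fun t => G (t, p.2)) p.1 :=
      (hGd p hp).comp (g := G) p.1 (differentiableAt_id.prodMk (differentiableAt_const _))
    exact (hGl.congr_of_eventuallyEq heq).hasDerivAt
  have hSSd : ∀ p ∈ U, HasDerivAt (fun t => pderivS φ p.1 t)
      (pderivS (pderivS φ) p.1 p.2) p.2 := by
    intro p hp
    have hev : ∀ᶠ t in nhds p.2, ((p.1, t) : ℝ × ℝ) ∈ U :=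
      (Continuous.continuousAt (continuous_const.prodMk continuous_id)).preimage_mem_nhds
        (by simpa using hU.mem_nhds hp)
    have heq : (fun t => pderivS φ p.1 t) =ᶠ[nhds p.2] fun t => G (p.1, t) := by
      filter_upwards [hev] with t ht using hS_eq (p.1, t) ht
    have hGl : DifferentiableAt ℝ (fun t => G (p.1, t)) p.2 :=
      (hGd p hp).comp (g := G) p.2 ((differentiableAt_const _).prodMk differentiableAt_id)
    exact (hGl.congr_of_eventuallyEq heq).hasDerivAt
  -- the main identity
  have hmain : ∀ p ∈ U,
      p.2 * pderivR ψ p.1 p.2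
        + (1 - 2 * (p.1 ^ 2 - p.2 ^ 2) * Qt p.1 p.2) * p.1 * pderivS ψ p.1 p.2
      = -p.2 * Real.sqrt (p.1 ^ 2 - p.2 ^ 2) *
          ((p.1 * pderivS (pderivS φ) p.1 p.2 + p.2 * pderivR (pderivS φ) p.1 p.2
              - pderivR φ p.1 p.2)
            - 2 * p.1 * Qt p.1 p.2 *
              (φ p.1 p.2 - p.2 * pderivS φ p.1 p.2
                + (p.1 ^ 2 - p.2 ^ 2) * pderivS (pderivS φ) p.1 p.2)) := by
    intro p hp
    obtain ⟨hs, hsr⟩ := hUsub hp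
    obtain ⟨r, s⟩ := p
    simp only at hs hsr ⊢
    have hrs2 : (0 : ℝ) < r ^ 2 - s ^ 2 := by nlinarith
    have hApos : 0 < Real.sqrt (r ^ 2 - s ^ 2) := Real.sqrt_pos.2 hrs2
    have hA2 : Real.sqrt (r ^ 2 - s ^ 2) ^ 2 = r ^ 2 - s ^ 2 := Real.sq_sqrt hrs2.le
    have hsq : HasDerivAt (fun t : ℝ => Real.sqrt (t ^ 2 - s ^ 2))
        (r / Real.sqrt (r ^ 2 - s ^ 2)) r := by
      have h1 : HasDerivAt (fun t : ℝ => t ^ 2 - s ^ 2) (2 * r) r := by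
        simpa using (hasDerivAt_pow 2 r).sub_const (s ^ 2)
      have h2 := (Real.hasDerivAt_sqrt hrs2.ne').comp r h1
      refine h2.congr_deriv ?_
      field_simp
    have hsqs : HasDerivAt (fun t : ℝ => Real.sqrt (r ^ 2 - t ^ 2))
        (-s / Real.sqrt (r ^ 2 - s ^ 2)) s := by
      have h1 : HasDerivAt (fun t : ℝ => r ^ 2 - t ^ 2) (-(2 * s)) s := by
        simpa using (hasDerivAt_pow 2 s).const_sub (r ^ 2)
      have h2 := (Real.hasDerivAt_sqrt hrs2.ne').comp s h1
      refine h2.congr_deriv ?_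
      field_simp
    have hrw1 : (fun t => ψ t s)
        = fun t => Real.sqrt (t ^ 2 - s ^ 2) * (φ t s - s * pderivS φ t s) :=
      funext fun t => hψ t s
    have hrw2 : (fun t => ψ r t)
        = fun t => Real.sqrt (r ^ 2 - t ^ 2) * (φ r t - t * pderivS φ r t) :=
      funext fun t => hψ r t
    have hψr : HasDerivAt (fun t => ψ t s)
        (r / Real.sqrt (r ^ 2 - s ^ 2) * (φ r s - s * pderivS φ r s)
          + Real.sqrt (r ^ 2 - s ^ 2)
            * (pderivR φ r s - s * pderivR (pderivS φ) r s)) r := by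
      rw [hrw1]
      exact hsq.mul ((hRd (r, s) hp).sub ((hSRd (r, s) hp).const_mul s))
    have hψs : HasDerivAt (fun t => ψ r t)
        (-s / Real.sqrt (r ^ 2 - s ^ 2) * (φ r s - s * pderivS φ r s)
          + Real.sqrt (r ^ 2 - s ^ 2)
            * (pderivS φ r s
                - (1 * pderivS φ r s + s * pderivS (pderivS φ) r s))) s := by
      rw [hrw2]
      exact hsqs.mul ((hSd (r, s) hp).sub ((hasDerivAt_id s).mul (hSSd (r, s) hp)))
    have h1 : pderivR ψ r s
        = r / Real.sqrt (r ^ 2 - s ^ 2) * (φ r s - s * pderivS φ r s)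
          + Real.sqrt (r ^ 2 - s ^ 2)
            * (pderivR φ r s - s * pderivR (pderivS φ) r s) := hψr.deriv
    have h2 : pderivS ψ r s
        = -s / Real.sqrt (r ^ 2 - s ^ 2) * (φ r s - s * pderivS φ r s)
          + Real.sqrt (r ^ 2 - s ^ 2)
            * (pderivS φ r s
                - (1 * pderivS φ r s + s * pderivS (pderivS φ) r s)) := hψs.deriv
    generalize hAg : Real.sqrt (r ^ 2 - s ^ 2) = A at h1 h2 hA2 hApos ⊢
    rw [h1, h2, ← hA2]
    field_simp
    ring
  refine ⟨hmain, ?_, ?_⟩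
  · intro h p hp
    rw [hmain p hp, h p hp]
    ring
  · intro h p hp
    have hid := hmain p hp
    rw [h p hp] at hid
    obtain ⟨hs, hsr⟩ := hUsub hp
    have hApos : 0 < Real.sqrt (p.1 ^ 2 - p.2 ^ 2) :=
      Real.sqrt_pos.2 (by nlinarith)
    have hx := (mul_eq_zero.1 hid.symm).resolve_left (by
      intro hzero
      rcases mul_eq_zero.1 hzero with h' | h'
      · exact absurd h' (by simpa using hs.ne')
      · exact hApos.ne' h')
    linarith [hx]
end

section
/- Let I ⊆ (0,∞) be an open interval and let f, g : I → ℝ be smooth. Define Q(r,s) := g(r) + s²·f(r)/2. Then for all r ∈ I and all s, R₂(r,s) := 2Q(2Q − sQ_s) + (1/r)(2Q_r − sQ_rs − rQ_ss) + (r² − s²)(2Q·Q_ss − Q_s²) = 4g(r)² + 2g'(r)/r − f(r)·(1 − 2r²g(r)); in particular R₂ does not depend on s. Consequently, R₂ ≡ 0 on {(r,s) : r ∈ I, 0 < s < r} if and only if f(r)·(r − 2r³g(r)) = 2g'(r) + 4r·g(r)² for all r ∈ I; when 1 − 2r²g(r) ≠ 0 this means f(r) = (2g'(r) + 4rg(r)²)/(r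 − 2r³g(r)). -/
lemma deriv_aux (c d s : ℝ) : deriv (fun t : ℝ => c + t ^ 2 * d / 2) s = s * d := by
  have h : HasDerivAt (fun t : ℝ => c + t ^ 2 * d / 2) (s * d) s := by
    have h1 := ((hasDerivAt_pow 2 s).mul_const (d / 2)).const_add c
    have : (fun t : ℝ => c + t ^ 2 * (d / 2)) = fun t : ℝ => c + t ^ 2 * d / 2 := by
      funext t; ring
    rw [this] at h1
    exact h1.congr_deriv (by push_cast; ring)
  exact h.deriv

/-- For `Q(r,s) := g(r) + s²·f(r)/2`:
`R₂(r,s) = 4g(r)² + 2g'(r)/r − f(r)(1 − 2r²g(r))` (independent of `s`);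
`R₂ ≡ 0` on `{(r,s) : r ∈ I, 0 < s < r}` iff
`f(r)(r − 2r³g(r)) = 2g'(r) + 4rg(r)²` on `I`; and when `1 − 2r²g(r) ≠ 0`
this means `f(r) = (2g'(r) + 4rg(r)²)/(r − 2r³g(r))`. -/
theorem stmt_8 (I : Set ℝ) (hI : ∃ a b : ℝ, I = Set.Ioo a b)
    (hIpos : I ⊆ Set.Ioi (0 : ℝ))
    (f g : ℝ → ℝ) (hf : ContDiffOn ℝ (⊤ : ℕ∞) f I) (hg : ContDiffOn ℝ (⊤ : ℕ∞) g I)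
    (Q : ℝ → ℝ → ℝ) (hQ : ∀ r s : ℝ, Q r s = g r + s ^ 2 * f r / 2) :
    (∀ r ∈ I, ∀ s : ℝ,
      R2 Q r s = 4 * g r ^ 2 + 2 * deriv g r / r - f r * (1 - 2 * r ^ 2 * g r))
    ∧ ((∀ r ∈ I, ∀ s : ℝ, 0 < s → s < r → R2 Q r s = 0)
        ↔ ∀ r ∈ I, f r * (r - 2 * r ^ 3 * g r) = 2 * deriv g r + 4 * r * g r ^ 2)
    ∧ (∀ r ∈ I, 1 - 2 * r ^ 2 * g r ≠ 0 →
        (f r * (r - 2 * r ^ 3 * g r) = 2 * deriv g r + 4 * r * g r ^ 2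
          ↔ f r = (2 * deriv g r + 4 * r * g r ^ 2) / (r - 2 * r ^ 3 * g r))) := by
  obtain ⟨a, b, hIab⟩ := hI
  have hIopen : IsOpen I := hIab ▸ isOpen_Ioo
  -- pderivS Q = s * f r (everywhere)
  have hQS : ∀ r s : ℝ, pderivS Q r s = s * f r := by
    intro r s
    unfold pderivS
    simp only [hQ]
    exact deriv_aux _ _ _
  have hQSS : ∀ r s : ℝ, pderivS (pderivS Q) r s = f r := by
    intro r s
    have e : (fun t => pderivS Q r t) = fun t => t * f r := funext fun t => hQS r t
    show deriv (fun t => pderivS Q r t) s = f r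
    rw [e]
    simp
  have main : ∀ r ∈ I, ∀ s : ℝ,
      R2 Q r s = 4 * g r ^ 2 + 2 * deriv g r / r - f r * (1 - 2 * r ^ 2 * g r) := by
    intro r hr s
    have hrpos : (0 : ℝ) < r := hIpos hr
    have hdg : DifferentiableAt ℝ g r :=
      (hg.contDiffAt (hIopen.mem_nhds hr)).differentiableAt (by simp)
    have hdf : DifferentiableAt ℝ f r :=
      (hf.contDiffAt (hIopen.mem_nhds hr)).differentiableAt (by simp)
    have hQR : pderivR Q r s = deriv g r + s ^ 2 * deriv f r / 2 := by
      unfold pderivR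
      have : (fun t => Q t s) = fun t => g t + s ^ 2 / 2 * f t := by
        funext t; rw [hQ]; ring
      rw [this, deriv_fun_add hdg ((hdf.const_mul _)), deriv_const_mul _ hdf]
      ring
    have hQRS : pderivR (pderivS Q) r s = s * deriv f r := by
      unfold pderivR
      have : (fun t => pderivS Q t s) = fun t => s * f t := by
        funext t; exact hQS t s
      rw [this, deriv_const_mul _ hdf]
    unfold R2
    rw [hQS, hQSS, hQR, hQRS, hQ]
    field_simp
    ring
  refine ⟨main, ?_, ?_⟩
  · constructor
    · intro h r hr
      have hrpos : (0 : ℝ) < r := hIpos hr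
      have h1 := h r hr (r / 2) (by linarith) (by linarith)
      rw [main r hr (r / 2)] at h1
      have hrne : r ≠ 0 := ne_of_gt hrpos
      field_simp at h1 ⊢
      nlinarith [h1]
    · intro h r hr s hs hsr
      rw [main r hr s]
      have hrpos : (0 : ℝ) < r := hIpos hr
      have hrne : r ≠ 0 := ne_of_gt hrpos
      have h1 := h r hr
      field_simp
      nlinarith [h1]
  · intro r hr hne
    have hrpos : (0 : ℝ) < r := hIpos hr
    have hrne : r ≠ 0 := ne_of_gt hrpos
    have hne2 : r - 2 * r ^ 3 * g r ≠ 0 := by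
      intro h0
      apply hne
      have : r * (1 - 2 * r ^ 2 * g r) = 0 := by ring_nf; ring_nf at h0; linarith
      rcases mul_eq_zero.mp this with h | h
      · exact absurd h hrne
      · exact absurd h (fun _ => by simp_all)
    rw [eq_div_iff hne2]
end

section
/- Let φ be a smooth function on an open subset U of {(r,s) ∈ ℝ² : 0 < s < r} and suppose there exists a differentiable function η : ℝ → ℝ such that √(r² − s²)·(φ(r,s) − s·φ_s(r,s)) = η(r² − s²) for all (r,s) ∈ U. Then r·φ_ss + s·φ_rs − φ_r = 0 on U. -/
lemma deriv_snd_eq_fderiv {F : ℝ × ℝ → ℝ} {q : ℝ × ℝ} (h : DifferentiableAt ℝ F q) :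
    deriv (fun t => F (q.1, t)) q.2 = fderiv ℝ F q (0, 1) := by
  have line : HasDerivAt (fun t : ℝ => ((q.1 : ℝ), t)) ((0 : ℝ), (1 : ℝ)) q.2 :=
    (hasDerivAt_const _ _).prodMk (hasDerivAt_id _)
  have h' : HasFDerivAt F (fderiv ℝ F q) ((fun t : ℝ => ((q.1 : ℝ), t)) q.2) := by
    simpa using h.hasFDerivAt
  exact (h'.comp_hasDerivAt q.2 line).deriv

lemma deriv_fst_eq_fderiv {F : ℝ × ℝ → ℝ} {q : ℝ × ℝ} (h : DifferentiableAt ℝ F q) :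
    deriv (fun t => F (t, q.2)) q.1 = fderiv ℝ F q (1, 0) := by
  have line : HasDerivAt (fun t : ℝ => (t, (q.2 : ℝ))) ((1 : ℝ), (0 : ℝ)) q.1 :=
    (hasDerivAt_id _).prodMk (hasDerivAt_const _ _)
  have h' : HasFDerivAt F (fderiv ℝ F q) ((fun t : ℝ => (t, (q.2 : ℝ))) q.1) := by
    simpa using h.hasFDerivAt
  exact (h'.comp_hasDerivAt q.1 line).deriv

/-- If `√(r² − s²)·(φ − s·φ_s) = η(r² − s²)` on `U` for some differentiable `η`,
then `r·φ_ss + s·φ_rs − φ_r = 0` on `U`. -/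
theorem stmt_9
    (U : Set (ℝ × ℝ)) (hU : IsOpen U)
    (hUsub : U ⊆ {p : ℝ × ℝ | 0 < p.2 ∧ p.2 < p.1})
    (φ : ℝ → ℝ → ℝ) (hφ : ContDiffOn ℝ (⊤ : ℕ∞) (fun p : ℝ × ℝ => φ p.1 p.2) U)
    (η : ℝ → ℝ) (hη : Differentiable ℝ η)
    (heq : ∀ p ∈ U, Real.sqrt (p.1 ^ 2 - p.2 ^ 2) *
      (φ p.1 p.2 - p.2 * pderivS φ p.1 p.2) = η (p.1 ^ 2 - p.2 ^ 2)) :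
    ∀ p ∈ U, p.1 * pderivS (pderivS φ) p.1 p.2
      + p.2 * pderivR (pderivS φ) p.1 p.2 - pderivR φ p.1 p.2 = 0 := by
  set f : ℝ × ℝ → ℝ := fun q => φ q.1 q.2 with hfdef
  set g : ℝ × ℝ → ℝ := fun q => fderiv ℝ f q (0, 1) with hgdef
  have hg : ContDiffOn ℝ (⊤ : ℕ∞) g U :=
    (hφ.fderiv_of_isOpen hU (by simp)).clm_apply contDiffOn_const
  have hdf : ∀ q ∈ U, DifferentiableAt ℝ f q := fun q hq =>
    (hφ.contDiffAt (hU.mem_nhds hq)).differentiableAt (by simp)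
  have hdg : ∀ q ∈ U, DifferentiableAt ℝ g q := fun q hq =>
    (hg.contDiffAt (hU.mem_nhds hq)).differentiableAt (by simp)
  have hPS : ∀ q ∈ U, pderivS φ q.1 q.2 = g q := fun q hq =>
    deriv_snd_eq_fderiv (hdf q hq)
  intro p hp
  obtain ⟨r, s⟩ := p
  obtain ⟨hs0, hsr⟩ := hUsub hp
  simp only [Set.mem_setOf_eq] at hs0 hsr
  have hwpos : (0 : ℝ) < r ^ 2 - s ^ 2 := by nlinarith
  -- second partial derivatives in terms of fderiv of g
  have hSS : pderivS (pderivS φ) r s = fderiv ℝ g (r, s) (0, 1) := by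
    have hmemS : ∀ᶠ t in nhds s, ((r : ℝ), t) ∈ U := by
      have hcont : ContinuousAt (fun t : ℝ => ((r : ℝ), t)) s := by fun_prop
      exact hcont.eventually_mem (hU.mem_nhds hp)
    have heq1 : (fun t => pderivS φ r t) =ᶠ[nhds s] fun t => g (r, t) := by
      filter_upwards [hmemS] with t ht
      exact hPS (r, t) ht
    have h2 : pderivS (pderivS φ) r s = deriv (fun t => g (r, t)) s := heq1.deriv_eq
    rw [h2]
    exact deriv_snd_eq_fderiv (hdg (r, s) hp)
  have hRS : pderivR (pderivS φ) r s = fderiv ℝ g (r, s) (1, 0) := by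
    have hmemR : ∀ᶠ t in nhds r, ((t : ℝ), s) ∈ U := by
      have hcont : ContinuousAt (fun t : ℝ => ((t : ℝ), s)) r := by fun_prop
      exact hcont.eventually_mem (hU.mem_nhds hp)
    have heq1 : (fun t => pderivS φ t s) =ᶠ[nhds r] fun t => g (t, s) := by
      filter_upwards [hmemR] with t ht
      exact hPS (t, s) ht
    have h2 : pderivR (pderivS φ) r s = deriv (fun t => g (t, s)) r := heq1.deriv_eq
    rw [h2]
    exact deriv_fst_eq_fderiv (hdg (r, s) hp)
  have hPR : pderivR φ r s = fderiv ℝ f (r, s) (1, 0) :=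
    deriv_fst_eq_fderiv (hdf (r, s) hp)
  -- the curve c t = (r + t s, s + t r)
  set c : ℝ → ℝ × ℝ := fun t => (r + t * s, s + t * r) with hcdef
  have h1 : HasDerivAt (fun t : ℝ => r + t * s) s 0 := by
    simpa using ((hasDerivAt_id (0 : ℝ)).mul_const s).const_add r
  have h2 : HasDerivAt (fun t : ℝ => s + t * r) r 0 := by
    simpa using ((hasDerivAt_id (0 : ℝ)).mul_const r).const_add s
  have hcc : HasDerivAt c ((s : ℝ), (r : ℝ)) 0 := h1.prodMk h2
  have hc0 : c 0 = ((r : ℝ), (s : ℝ)) := by simp [hcdef]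
  have hw0 : (r + 0 * s) ^ 2 - (s + 0 * r) ^ 2 = r ^ 2 - s ^ 2 := by ring
  have hwc : HasDerivAt (fun t : ℝ => (r + t * s) ^ 2 - (s + t * r) ^ 2) 0 0 := by
    have := (h1.pow 2).sub (h2.pow 2)
    refine this.congr_deriv ?_
    simp
    ring
  have hA : HasDerivAt (fun t : ℝ => Real.sqrt ((r + t * s) ^ 2 - (s + t * r) ^ 2)) 0 0 := by
    have hne : (fun t : ℝ => (r + t * s) ^ 2 - (s + t * r) ^ 2) 0 ≠ 0 := by
      simp only []
      rw [hw0]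
      exact ne_of_gt hwpos
    have := hwc.sqrt hne
    simpa using this
  have hfc : HasDerivAt (fun t => f (c t)) (fderiv ℝ f (r, s) (s, r)) 0 := by
    have h' : HasFDerivAt f (fderiv ℝ f (r, s)) (c 0) := by
      rw [hc0]; exact (hdf _ hp).hasFDerivAt
    exact h'.comp_hasDerivAt 0 hcc
  have hgc : HasDerivAt (fun t => g (c t)) (fderiv ℝ g (r, s) (s, r)) 0 := by
    have h' : HasFDerivAt g (fderiv ℝ g (r, s)) (c 0) := by
      rw [hc0]; exact (hdg _ hp).hasFDerivAt
    exact h'.comp_hasDerivAt 0 hcc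
  set Df := fderiv ℝ f (r, s) (s, r) with hDf
  set Dg := fderiv ℝ g (r, s) (s, r) with hDg
  have hB : HasDerivAt (fun t => f (c t) - (s + t * r) * g (c t))
      (Df - (r * g (r, s) + s * Dg)) 0 := by
    have := hfc.sub (h2.mul hgc)
    refine this.congr_deriv ?_
    rw [hc0]
    ring
  have hH : HasDerivAt
      (fun t => Real.sqrt ((r + t * s) ^ 2 - (s + t * r) ^ 2) *
        (f (c t) - (s + t * r) * g (c t)))
      (Real.sqrt (r ^ 2 - s ^ 2) * (Df - (r * g (r, s) + s * Dg))) 0 := by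
    have := hA.mul hB
    refine this.congr_deriv ?_
    rw [hw0]
    ring
  have hK : HasDerivAt (fun t => η ((r + t * s) ^ 2 - (s + t * r) ^ 2)) 0 0 := by
    have h2' : HasDerivAt η (deriv η ((r + 0 * s) ^ 2 - (s + 0 * r) ^ 2))
        ((r + 0 * s) ^ 2 - (s + 0 * r) ^ 2) := (hη _).hasDerivAt
    have := h2'.comp 0 hwc
    exact this.congr_deriv (by simp)
  have hmemc : ∀ᶠ t in nhds (0 : ℝ), c t ∈ U := by
    have := hcc.continuousAt.eventually_mem (by rw [hc0]; exact hU.mem_nhds hp)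
    exact this
  have hHK : (fun t => Real.sqrt ((r + t * s) ^ 2 - (s + t * r) ^ 2) *
      (f (c t) - (s + t * r) * g (c t)))
      =ᶠ[nhds (0 : ℝ)] fun t => η ((r + t * s) ^ 2 - (s + t * r) ^ 2) := by
    filter_upwards [hmemc] with t ht
    have h := heq (c t) ht
    rw [hPS (c t) ht] at h
    exact h
  have key : Real.sqrt (r ^ 2 - s ^ 2) * (Df - (r * g (r, s) + s * Dg)) = 0 := by
    have e := hHK.deriv_eq
    rw [hH.deriv, hK.deriv] at e
    exact e
  have hsq : (0 : ℝ) < Real.sqrt (r ^ 2 - s ^ 2) := Real.sqrt_pos.mpr hwpos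
  have key2 : Df = r * g (r, s) + s * Dg := by
    rcases mul_eq_zero.mp key with h | h
    · exact absurd h (ne_of_gt hsq)
    · linarith [sub_eq_zero.mp h]
  -- expand directional derivatives by linearity
  have hvsum : ((s : ℝ), (r : ℝ)) = s • ((1 : ℝ), (0 : ℝ)) + r • ((0 : ℝ), (1 : ℝ)) := by
    simp [Prod.ext_iff]
  have hvf : Df = s * fderiv ℝ f (r, s) (1, 0) + r * fderiv ℝ f (r, s) (0, 1) := by
    rw [hDf, hvsum, map_add, map_smul, map_smul]
    simp [smul_eq_mul]
  have hvg : Dg = s * fderiv ℝ g (r, s) (1, 0) + r * fderiv ℝ g (r, s) (0, 1) := by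
    rw [hDg, hvsum, map_add, map_smul, map_smul]
    simp [smul_eq_mul]
  have hgp : g (r, s) = fderiv ℝ f (r, s) (0, 1) := rfl
  show r * pderivS (pderivS φ) r s + s * pderivR (pderivS φ) r s - pderivR φ r s = 0
  rw [hSS, hRS, hPR]
  have hfinal : s * fderiv ℝ f (r, s) (1, 0)
      = s * (s * fderiv ℝ g (r, s) (1, 0) + r * fderiv ℝ g (r, s) (0, 1)) := by
    rw [hvf, hgp] at key2
    rw [hvg] at key2
    linarith
  have := mul_left_cancel₀ (ne_of_gt hs0) hfinal
  linarith
end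

section
/- Let P, Q, U be smooth functions on an open subset V of {(r,s) ∈ ℝ² : 0 < s < r} and set W := 2r·(P + U·Q). Then at any point of V, the mixed-partial compatibility condition ∂/∂s [ (1/s)·( W − r·(U − s)/(r² − s²) ) ] = ∂/∂r [ (U − s)/(r² − s²) ] holds if and only if s²·U_r = r·s·(2(r² − s²)·Q − 1)·U_s + ( r + 2r(r² − s²)·(s·Q_s − Q) )·U + 2r(r² − s²)·(s·P_s − P) holds at that point. -/
/-- With `W := 2r·(P + U·Q)`, the compatibility condition
`∂/∂s[(1/s)(W − r(U − s)/(r² − s²))] = ∂/∂r[(U − s)/(r² − s²)]` holds at a point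
of `V` iff `s²·U_r = rs(2(r² − s²)Q − 1)·U_s + (r + 2r(r² − s²)(sQ_s − Q))·U
+ 2r(r² − s²)(sP_s − P)` holds there (equation (13) of the paper). -/
theorem stmt_14
    (V : Set (ℝ × ℝ)) (hV : IsOpen V)
    (hVsub : V ⊆ {p : ℝ × ℝ | 0 < p.2 ∧ p.2 < p.1})
    (P Q U : ℝ → ℝ → ℝ)
    (hP : ContDiffOn ℝ (⊤ : ℕ∞) (fun p : ℝ × ℝ => P p.1 p.2) V)
    (hQ : ContDiffOn ℝ (⊤ : ℕ∞) (fun p : ℝ × ℝ => Q p.1 p.2) V)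
    (hU : ContDiffOn ℝ (⊤ : ℕ∞) (fun p : ℝ × ℝ => U p.1 p.2) V)
    (W : ℝ → ℝ → ℝ)
    (hW : ∀ r s : ℝ, W r s = 2 * r * (P r s + U r s * Q r s)) :
    ∀ p ∈ V,
      (pderivS (fun r s => (1 / s) * (W r s - r * (U r s - s) / (r ^ 2 - s ^ 2)))
            p.1 p.2
          = pderivR (fun r s => (U r s - s) / (r ^ 2 - s ^ 2)) p.1 p.2)
      ↔ p.2 ^ 2 * pderivR U p.1 p.2
          = p.1 * p.2 * (2 * (p.1 ^ 2 - p.2 ^ 2) * Q p.1 p.2 - 1) *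
              pderivS U p.1 p.2
            + (p.1 + 2 * p.1 * (p.1 ^ 2 - p.2 ^ 2) *
                (p.2 * pderivS Q p.1 p.2 - Q p.1 p.2)) * U p.1 p.2
            + 2 * p.1 * (p.1 ^ 2 - p.2 ^ 2) *
                (p.2 * pderivS P p.1 p.2 - P p.1 p.2) := by
  rintro ⟨r, s⟩ hp
  obtain ⟨hs, hsr⟩ := hVsub hp
  simp only [Set.mem_setOf_eq] at hs hsr ⊢
  have hr : 0 < r := lt_trans hs hsr
  have hD : (0:ℝ) < r ^ 2 - s ^ 2 := by nlinarith
  have hDne : r ^ 2 - s ^ 2 ≠ 0 := ne_of_gt hD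
  have hsne : s ≠ 0 := ne_of_gt hs
  -- differentiability at the point
  have hnb : V ∈ nhds ((r, s) : ℝ × ℝ) := hV.mem_nhds hp
  have hPd : DifferentiableAt ℝ (fun p : ℝ × ℝ => P p.1 p.2) (r, s) :=
    ((hP.contDiffAt hnb).differentiableAt (by simp))
  have hQd : DifferentiableAt ℝ (fun p : ℝ × ℝ => Q p.1 p.2) (r, s) :=
    ((hQ.contDiffAt hnb).differentiableAt (by simp))
  have hUd : DifferentiableAt ℝ (fun p : ℝ × ℝ => U p.1 p.2) (r, s) :=
    ((hU.contDiffAt hnb).differentiableAt (by simp))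
  have hcurveS : DifferentiableAt ℝ (fun t : ℝ => ((r, t) : ℝ × ℝ)) s :=
    DifferentiableAt.prodMk (differentiableAt_const r) differentiableAt_id
  have hcurveR : DifferentiableAt ℝ (fun t : ℝ => ((t, s) : ℝ × ℝ)) r :=
    DifferentiableAt.prodMk differentiableAt_id (differentiableAt_const s)
  have hPs : HasDerivAt (fun t => P r t) (pderivS P r s) s := by
    have h1 : DifferentiableAt ℝ (fun t => P r t) s := hPd.comp s hcurveS
    simpa [pderivS] using h1.hasDerivAt
  have hQs : HasDerivAt (fun t => Q r t) (pderivS Q r s) s := by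
    have h1 : DifferentiableAt ℝ (fun t => Q r t) s := hQd.comp s hcurveS
    simpa [pderivS] using h1.hasDerivAt
  have hUs : HasDerivAt (fun t => U r t) (pderivS U r s) s := by
    have h1 : DifferentiableAt ℝ (fun t => U r t) s := hUd.comp s hcurveS
    simpa [pderivS] using h1.hasDerivAt
  have hUr : HasDerivAt (fun t => U t s) (pderivR U r s) r := by
    have h1 : DifferentiableAt ℝ (fun t => U t s) r := DifferentiableAt.comp (g := fun p : ℝ × ℝ => U p.1 p.2) r hUd hcurveR
    simpa [pderivR] using h1.hasDerivAt
  set pP := pderivS P r s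
  set qS := pderivS Q r s
  set uS := pderivS U r s
  set uR := pderivR U r s
  -- derivative of the s-side function
  have hdenS : HasDerivAt (fun t : ℝ => r ^ 2 - t ^ 2) (0 - 2 * s) s := by
    have := (hasDerivAt_pow 2 s)
    exact ((hasDerivAt_const s (r ^ 2)).sub this).congr_deriv (by norm_num)
  have hnumS : HasDerivAt (fun t => r * (U r t - t)) (r * (uS - 1)) s :=
    ((hUs.sub (hasDerivAt_id s)).const_mul r)
  have hfracS : HasDerivAt (fun t => r * (U r t - t) / (r ^ 2 - t ^ 2))
      ((r * (uS - 1) * (r ^ 2 - s ^ 2) - r * (U r s - s) * (0 - 2 * s)) / (r ^ 2 - s ^ 2) ^ 2)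
      s := hnumS.div hdenS hDne
  have hPQ : HasDerivAt (fun t => 2 * r * (P r t + U r t * Q r t))
      (2 * r * (pP + (uS * Q r s + U r s * qS))) s :=
    ((hPs.add (hUs.mul hQs)).const_mul (2 * r))
  have hinv : HasDerivAt (fun t : ℝ => 1 / t) (-(s ^ 2)⁻¹) s := by
    simpa [one_div] using hasDerivAt_inv hsne
  have hG : HasDerivAt
      (fun t => (1 / t) * (2 * r * (P r t + U r t * Q r t) - r * (U r t - t) / (r ^ 2 - t ^ 2)))
      (-(s ^ 2)⁻¹ * (2 * r * (P r s + U r s * Q r s) - r * (U r s - s) / (r ^ 2 - s ^ 2))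
        + (1 / s) * (2 * r * (pP + (uS * Q r s + U r s * qS))
          - (r * (uS - 1) * (r ^ 2 - s ^ 2) - r * (U r s - s) * (0 - 2 * s)) / (r ^ 2 - s ^ 2) ^ 2))
      s := hinv.mul (hPQ.sub hfracS)
  -- derivative of the r-side function
  have hdenR : HasDerivAt (fun t : ℝ => t ^ 2 - s ^ 2) (2 * r - 0) r := by
    have := (hasDerivAt_pow 2 r)
    exact (this.sub (hasDerivAt_const r (s ^ 2))).congr_deriv (by norm_num)
  have hH : HasDerivAt (fun t => (U t s - s) / (t ^ 2 - s ^ 2))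
      (((uR - 0) * (r ^ 2 - s ^ 2) - (U r s - s) * (2 * r - 0)) / (r ^ 2 - s ^ 2) ^ 2)
      r := (hUr.sub (hasDerivAt_const r s)).div hdenR hDne
  have eG : pderivS (fun r s => (1 / s) * (W r s - r * (U r s - s) / (r ^ 2 - s ^ 2))) r s
      = -(s ^ 2)⁻¹ * (2 * r * (P r s + U r s * Q r s) - r * (U r s - s) / (r ^ 2 - s ^ 2))
        + (1 / s) * (2 * r * (pP + (uS * Q r s + U r s * qS))
          - (r * (uS - 1) * (r ^ 2 - s ^ 2) - r * (U r s - s) * (0 - 2 * s)) / (r ^ 2 - s ^ 2) ^ 2) := by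
    simp only [pderivS, hW]
    exact hG.deriv
  have eH : pderivR (fun r s => (U r s - s) / (r ^ 2 - s ^ 2)) r s
      = ((uR - 0) * (r ^ 2 - s ^ 2) - (U r s - s) * (2 * r - 0)) / (r ^ 2 - s ^ 2) ^ 2 := by
    simp only [pderivR]
    exact hH.deriv
  rw [eG, eH, ← sub_eq_zero]
  have hc : (-(1 / (s ^ 2 * (r ^ 2 - s ^ 2)))) ≠ 0 := by
    simp only [ne_eq, neg_eq_zero, one_div, inv_eq_zero, mul_eq_zero, not_or]
    exact ⟨pow_ne_zero 2 hsne, hDne⟩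
  have key :
      (-(s ^ 2)⁻¹ * (2 * r * (P r s + U r s * Q r s) - r * (U r s - s) / (r ^ 2 - s ^ 2))
        + (1 / s) * (2 * r * (pP + (uS * Q r s + U r s * qS))
          - (r * (uS - 1) * (r ^ 2 - s ^ 2) - r * (U r s - s) * (0 - 2 * s)) / (r ^ 2 - s ^ 2) ^ 2))
      - ((uR - 0) * (r ^ 2 - s ^ 2) - (U r s - s) * (2 * r - 0)) / (r ^ 2 - s ^ 2) ^ 2
      = (-(1 / (s ^ 2 * (r ^ 2 - s ^ 2)))) *
          (s ^ 2 * uR - (r * s * (2 * (r ^ 2 - s ^ 2) * Q r s - 1) * uS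
            + (r + 2 * r * (r ^ 2 - s ^ 2) * (s * qS - Q r s)) * U r s
            + 2 * r * (r ^ 2 - s ^ 2) * (s * pP - P r s))) := by
    field_simp
    ring
  rw [key]
  constructor
  · intro h
    have h0 := (mul_eq_zero.mp h).resolve_left hc
    linarith
  · intro h
    have h0 : s ^ 2 * uR - (r * s * (2 * (r ^ 2 - s ^ 2) * Q r s - 1) * uS
        + (r + 2 * r * (r ^ 2 - s ^ 2) * (s * qS - Q r s)) * U r s
        + 2 * r * (r ^ 2 - s ^ 2) * (s * pP - P r s)) = 0 := by linarith
    rw [h0, mul_zero]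
end

section
/- Let h : (0,∞) → ℝ be smooth and c ∈ ℝ, and define φ(r,s) := h(r)·s + c·√(r² + 4r(r² − s²)) / ( r·(1 + 4r) ) on {(r,s) ∈ ℝ² : 0 < s < r}. Then φ satisfies r·φ_ss + s·φ_rs − φ_r = 2r·( −1/r + s²/r³ )·( φ − s·φ_s + (r² − s²)·φ_ss ) at every point of this domain. Hence the geodesic coefficient Q of φ equals Q(r,s) = −1/r + s²/r³ = g(r) + s²f(r)/2 with g(r) = −1/r and f(r) = 2/r³, which satisfies f(r)(r − 2r³g(r)) = 2g'(r) + 4rg(r)², so R₂ = 0. -/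
/-- Example 8: `φ(r,s) := h(r)·s + c·√(r² + 4r(r² − s²))/(r(1 + 4r))` satisfies
`rφ_ss + sφ_rs − φ_r = 2r(−1/r + s²/r³)(φ − sφ_s + (r² − s²)φ_ss)`, so its
geodesic coefficient is `Q(r,s) = −1/r + s²/r³ = g(r) + s²f(r)/2` with
`g(r) = −1/r`, `f(r) = 2/r³`, which satisfies
`f(r)(r − 2r³g(r)) = 2g'(r) + 4rg(r)²`, whence `R₂ = 0`. -/
theorem stmt_15 (h : ℝ → ℝ) (hh : ContDiffOn ℝ (⊤ : ℕ∞) h (Set.Ioi 0)) (c : ℝ)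
    (φ : ℝ → ℝ → ℝ)
    (hφ : ∀ r s : ℝ, φ r s =
      h r * s + c * Real.sqrt (r ^ 2 + 4 * r * (r ^ 2 - s ^ 2)) / (r * (1 + 4 * r))) :
    (∀ r s : ℝ, 0 < s → s < r →
      r * pderivS (pderivS φ) r s + s * pderivR (pderivS φ) r s - pderivR φ r s
        = 2 * r * (-1 / r + s ^ 2 / r ^ 3) *
            (φ r s - s * pderivS φ r s + (r ^ 2 - s ^ 2) * pderivS (pderivS φ) r s))
    ∧ (∀ r : ℝ, 0 < r →
        (2 / r ^ 3) * (r - 2 * r ^ 3 * (-1 / r))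
          = 2 * deriv (fun t : ℝ => -1 / t) r + 4 * r * (-1 / r) ^ 2)
    ∧ (∀ r s : ℝ, 0 < s → s < r →
        R2 (fun r s => -1 / r + s ^ 2 / r ^ 3) r s = 0) := by
  refine ⟨?_, ?_, ?_⟩
  ·
      have hφ' : φ = fun r s => h r * s + c * Real.sqrt (r ^ 2 + 4 * r * (r ^ 2 - s ^ 2)) / (r * (1 + 4 * r)) :=
        funext fun r => funext fun s => hφ r s
      subst hφ'
      intro r s hs hsr
      have hr0 : 0 < r := hs.trans hsr
      have hs2 : s ^ 2 < r ^ 2 := by nlinarith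
      have hA : 0 < r ^ 2 + 4 * r * (r ^ 2 - s ^ 2) := by
        nlinarith [mul_pos hr0 (sub_pos.mpr hs2), sq_nonneg r]
      -- s-derivative at a general point
      have val_s : ∀ ρ t : ℝ, 0 < ρ ^ 2 + 4 * ρ * (ρ ^ 2 - t ^ 2) →
          HasDerivAt (fun x => h ρ * x + c * Real.sqrt (ρ ^ 2 + 4 * ρ * (ρ ^ 2 - x ^ 2)) / (ρ * (1 + 4 * ρ)))
            (h ρ + c * (-(4 * ρ * t) / Real.sqrt (ρ ^ 2 + 4 * ρ * (ρ ^ 2 - t ^ 2))) / (ρ * (1 + 4 * ρ))) t := by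
        intro ρ t hAt
        have h1 : HasDerivAt (fun x : ℝ => h ρ * x) (h ρ) t := by
          simpa using (hasDerivAt_id t).const_mul (h ρ)
        have h2 : HasDerivAt (fun x : ℝ => ρ ^ 2 + 4 * ρ * (ρ ^ 2 - x ^ 2)) (-(8 * ρ * t)) t := by
          have := (((hasDerivAt_pow 2 t).const_sub (ρ ^ 2)).const_mul (4 * ρ)).const_add (ρ ^ 2)
          refine this.congr_deriv ?_
          push_cast; ring
        have h3 : HasDerivAt (fun x => Real.sqrt (ρ ^ 2 + 4 * ρ * (ρ ^ 2 - x ^ 2)))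
            (-(4 * ρ * t) / Real.sqrt (ρ ^ 2 + 4 * ρ * (ρ ^ 2 - t ^ 2))) t := by
          have := h2.sqrt hAt.ne'
          convert this using 1
          rw [div_eq_div_iff (Real.sqrt_ne_zero'.mpr hAt) (by positivity)]
          ring
        exact h1.add ((h3.const_mul c).div_const _)
      have hDs : pderivS (fun r s => h r * s + c * Real.sqrt (r ^ 2 + 4 * r * (r ^ 2 - s ^ 2)) / (r * (1 + 4 * r))) r s
          = h r + c * (-(4 * r * s) / Real.sqrt (r ^ 2 + 4 * r * (r ^ 2 - s ^ 2))) / (r * (1 + 4 * r)) :=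
        (val_s r s hA).deriv
      -- continuity facts
      have hx : ∀ᶠ t in nhds s, 0 < r ^ 2 + 4 * r * (r ^ 2 - t ^ 2) := by
        have hc : ContinuousAt (fun t : ℝ => r ^ 2 + 4 * r * (r ^ 2 - t ^ 2)) s := by fun_prop
        exact (hc.eventually_mem (lt_mem_nhds hA)).mono fun t ht => ht
      have hx2 : ∀ᶠ t in nhds r, 0 < t ^ 2 + 4 * t * (t ^ 2 - s ^ 2) := by
        have hc : ContinuousAt (fun t : ℝ => t ^ 2 + 4 * t * (t ^ 2 - s ^ 2)) r := by fun_prop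
        exact (hc.eventually_mem (lt_mem_nhds hA)).mono fun t ht => ht
      have hv0 : 0 < Real.sqrt (r ^ 2 + 4 * r * (r ^ 2 - s ^ 2)) := Real.sqrt_pos.mpr hA
      have heq : (fun t => pderivS (fun r s => h r * s + c * Real.sqrt (r ^ 2 + 4 * r * (r ^ 2 - s ^ 2)) / (r * (1 + 4 * r))) r t)
          =ᶠ[nhds s] (fun t => h r + c * (-(4 * r * t) / Real.sqrt (r ^ 2 + 4 * r * (r ^ 2 - t ^ 2))) / (r * (1 + 4 * r))) :=
        hx.mono fun t ht => (val_s r t ht).deriv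
      have heq2 : (fun t => pderivS (fun r s => h r * s + c * Real.sqrt (r ^ 2 + 4 * r * (r ^ 2 - s ^ 2)) / (r * (1 + 4 * r))) t s)
          =ᶠ[nhds r] (fun t => h t + c * (-(4 * t * s) / Real.sqrt (t ^ 2 + 4 * t * (t ^ 2 - s ^ 2))) / (t * (1 + 4 * t))) :=
        hx2.mono fun t ht => (val_s t s ht).deriv
      -- sqrt derivative in s at s
      have hw : HasDerivAt (fun x => Real.sqrt (r ^ 2 + 4 * r * (r ^ 2 - x ^ 2)))
          (-(4 * r * s) / Real.sqrt (r ^ 2 + 4 * r * (r ^ 2 - s ^ 2))) s := by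
        have h2 : HasDerivAt (fun x : ℝ => r ^ 2 + 4 * r * (r ^ 2 - x ^ 2)) (-(8 * r * s)) s := by
          have := (((hasDerivAt_pow 2 s).const_sub (r ^ 2)).const_mul (4 * r)).const_add (r ^ 2)
          refine this.congr_deriv ?_
          push_cast; ring
        have := h2.sqrt hA.ne'
        convert this using 1
        rw [div_eq_div_iff hv0.ne' (by positivity)]
        ring
      -- second s derivative
      have hDss : pderivS (pderivS (fun r s => h r * s + c * Real.sqrt (r ^ 2 + 4 * r * (r ^ 2 - s ^ 2)) / (r * (1 + 4 * r)))) r s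
          = c * ((-(4 * r) * Real.sqrt (r ^ 2 + 4 * r * (r ^ 2 - s ^ 2)) - -(4 * r * s) * (-(4 * r * s) / Real.sqrt (r ^ 2 + 4 * r * (r ^ 2 - s ^ 2)))) / Real.sqrt (r ^ 2 + 4 * r * (r ^ 2 - s ^ 2)) ^ 2) / (r * (1 + 4 * r)) := by
        show deriv (fun t => pderivS (fun r s => h r * s + c * Real.sqrt (r ^ 2 + 4 * r * (r ^ 2 - s ^ 2)) / (r * (1 + 4 * r))) r t) s = _
        rw [heq.deriv_eq]
        have hn : HasDerivAt (fun x : ℝ => -(4 * r * x)) (-(4 * r)) s := by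
          have := (((hasDerivAt_id' (𝕜 := ℝ)) s).const_mul (4 * r)).neg
          refine this.congr_deriv ?_
          ring
        exact (((hn.div hw hv0.ne').const_mul c).div_const _).const_add (h r) |>.deriv
      -- derivative of A in r direction
      have hA2 : HasDerivAt (fun x : ℝ => x ^ 2 + 4 * x * (x ^ 2 - s ^ 2)) (2 * r + 12 * r ^ 2 - 4 * s ^ 2) r := by
        have := (hasDerivAt_pow 2 r).add ((((hasDerivAt_id' (𝕜 := ℝ)) r).const_mul 4).mul ((hasDerivAt_pow 2 r).sub_const (s ^ 2)))
        refine this.congr_deriv ?_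
        push_cast; ring
      have hw2 : HasDerivAt (fun x => Real.sqrt (x ^ 2 + 4 * x * (x ^ 2 - s ^ 2)))
          ((2 * r + 12 * r ^ 2 - 4 * s ^ 2) / (2 * Real.sqrt (r ^ 2 + 4 * r * (r ^ 2 - s ^ 2)))) r :=
        hA2.sqrt hA.ne'
      have hDen : HasDerivAt (fun x : ℝ => x * (1 + 4 * x)) (1 + 8 * r) r := by
        have := ((hasDerivAt_id' (𝕜 := ℝ)) r).mul ((((hasDerivAt_id' (𝕜 := ℝ)) r).const_mul 4).const_add 1)
        refine this.congr_deriv ?_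
        ring
      have hDne : r * (1 + 4 * r) ≠ 0 := by positivity
      have hH : HasDerivAt h (deriv h r) r := by
        have hdiff : DifferentiableAt ℝ h r :=
          ((hh.differentiableOn (by simp)) r (Set.mem_Ioi.mpr hr0)).differentiableAt
            (Ioi_mem_nhds hr0)
        exact hdiff.hasDerivAt
      -- r derivative
      have hDr : pderivR (fun r s => h r * s + c * Real.sqrt (r ^ 2 + 4 * r * (r ^ 2 - s ^ 2)) / (r * (1 + 4 * r))) r s
          = deriv h r * s + (c * ((2 * r + 12 * r ^ 2 - 4 * s ^ 2) / (2 * Real.sqrt (r ^ 2 + 4 * r * (r ^ 2 - s ^ 2)))) * (r * (1 + 4 * r)) - c * Real.sqrt (r ^ 2 + 4 * r * (r ^ 2 - s ^ 2)) * (1 + 8 * r)) / (r * (1 + 4 * r)) ^ 2 :=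
        ((hH.mul_const s).add (((hw2.const_mul c).div hDen hDne))).deriv
      -- mixed derivative
      have hDrs : pderivR (pderivS (fun r s => h r * s + c * Real.sqrt (r ^ 2 + 4 * r * (r ^ 2 - s ^ 2)) / (r * (1 + 4 * r)))) r s
          = deriv h r + (c * ((-(4 * s) * Real.sqrt (r ^ 2 + 4 * r * (r ^ 2 - s ^ 2)) - -(4 * r * s) * ((2 * r + 12 * r ^ 2 - 4 * s ^ 2) / (2 * Real.sqrt (r ^ 2 + 4 * r * (r ^ 2 - s ^ 2))))) / Real.sqrt (r ^ 2 + 4 * r * (r ^ 2 - s ^ 2)) ^ 2) * (r * (1 + 4 * r)) - c * (-(4 * r * s) / Real.sqrt (r ^ 2 + 4 * r * (r ^ 2 - s ^ 2))) * (1 + 8 * r)) / (r * (1 + 4 * r)) ^ 2 := by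
        show deriv (fun t => pderivS (fun r s => h r * s + c * Real.sqrt (r ^ 2 + 4 * r * (r ^ 2 - s ^ 2)) / (r * (1 + 4 * r))) t s) r = _
        rw [heq2.deriv_eq]
        have hn : HasDerivAt (fun x : ℝ => -(4 * x * s)) (-(4 * s)) r := by
          have := ((((hasDerivAt_id' (𝕜 := ℝ)) r).const_mul 4).mul_const s).neg
          refine this.congr_deriv ?_
          ring
        exact hH.add (((hn.div hw2 hv0.ne').const_mul c).div hDen hDne) |>.deriv
      rw [hDss, hDrs, hDr]
      show _ - _ = 2 * r * (-1 / r + s ^ 2 / r ^ 3) * ((h r * s + c * Real.sqrt (r ^ 2 + 4 * r * (r ^ 2 - s ^ 2)) / (r * (1 + 4 * r))) - s * pderivS (fun r s => h r * s + c * Real.sqrt (r ^ 2 + 4 * r * (r ^ 2 - s ^ 2)) / (r * (1 + 4 * r))) r s + (r ^ 2 - s ^ 2) * _)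
      rw [hDs]
      set v := Real.sqrt (r ^ 2 + 4 * r * (r ^ 2 - s ^ 2)) with hvdef
      have hv2 : v ^ 2 = r ^ 2 + 4 * r * (r ^ 2 - s ^ 2) := Real.sq_sqrt hA.le
      clear_value v
      set H := deriv h r with hHdef
      clear_value H
      set b := h r with hbdef
      clear_value b
      have h4 : (1 : ℝ) + 4 * r ≠ 0 := by positivity
      field_simp
      linear_combination ((20 * r ^ 2 * v ^ 2 * c) + (2 * r * v ^ 2 * c) + (16 * r ^ 3 * v ^ 2 * c) + (-16 * r * s ^ 2 * v ^ 2 * c) + (-4 * s ^ 2 * v ^ 2 * c) + (-8 * r ^ 2 * s ^ 2 * c) + (64 * r ^ 4 * s ^ 2 * c) + (-64 * r ^ 2 * s ^ 4 * c) + (-16 * r * s ^ 4 * c) + (-16 * r ^ 3 * s ^ 2 * c)) * hv2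
  ·
      intro r hr
      have hd : HasDerivAt (fun t : ℝ => -1 / t) ((0 * r - (-1) * 1) / r ^ 2) r :=
        (hasDerivAt_const r (-1 : ℝ)).div (hasDerivAt_id r) hr.ne'
      rw [hd.deriv]
      field_simp
      ring
  ·
      intro r s hs hsr
      have hr : 0 < r := hs.trans hsr
      set Q : ℝ → ℝ → ℝ := fun r s => -1 / r + s ^ 2 / r ^ 3 with hQ
      have hQs : ∀ ρ t : ℝ, pderivS Q ρ t = 2 * t / ρ ^ 3 := by
        intro ρ t
        have : HasDerivAt (fun x : ℝ => -1 / ρ + x ^ 2 / ρ ^ 3) (2 * t / ρ ^ 3) t := by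
          have := ((hasDerivAt_pow 2 t).div_const (ρ ^ 3)).const_add (-1 / ρ)
          refine this.congr_deriv ?_
          push_cast; ring
        exact this.deriv
      have hQss : pderivS (pderivS Q) r s = 2 / r ^ 3 := by
        have he : (fun t => pderivS Q r t) = (fun t => 2 * t / r ^ 3) := funext fun t => hQs r t
        show deriv (fun t => pderivS Q r t) s = _
        rw [he]
        have : HasDerivAt (fun x : ℝ => 2 * x / r ^ 3) (2 / r ^ 3) s := by
          have := ((hasDerivAt_id s).const_mul 2).div_const (r ^ 3)
          refine this.congr_deriv ?_
          ring
        exact this.deriv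
      have hQr : pderivR Q r s = (0 * r - (-1) * 1) / r ^ 2 + (0 * r ^ 3 - s ^ 2 * (3 * r ^ 2)) / (r ^ 3) ^ 2 := by
        have h1 : HasDerivAt (fun t : ℝ => -1 / t) ((0 * r - (-1) * 1) / r ^ 2) r :=
          (hasDerivAt_const r (-1 : ℝ)).div (hasDerivAt_id r) hr.ne'
        have h2 : HasDerivAt (fun t : ℝ => s ^ 2 / t ^ 3) ((0 * r ^ 3 - s ^ 2 * (3 * r ^ 2)) / (r ^ 3) ^ 2) r := by
          have := (hasDerivAt_const r (s ^ 2)).div (hasDerivAt_pow 3 r) (pow_ne_zero 3 hr.ne')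
          refine this.congr_deriv ?_ <;> push_cast <;> ring
        exact (h1.add h2).deriv
      have hQrs : pderivR (pderivS Q) r s = (0 * r ^ 3 - 2 * s * (3 * r ^ 2)) / (r ^ 3) ^ 2 := by
        have he : (fun t => pderivS Q t s) = (fun t => 2 * s / t ^ 3) := funext fun t => hQs t s
        show deriv (fun t => pderivS Q t s) r = _
        rw [he]
        have : HasDerivAt (fun t : ℝ => 2 * s / t ^ 3) ((0 * r ^ 3 - 2 * s * (3 * r ^ 2)) / (r ^ 3) ^ 2) r := by
          have := (hasDerivAt_const r (2 * s)).div (hasDerivAt_pow 3 r) (pow_ne_zero 3 hr.ne')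
          refine this.congr_deriv ?_ <;> push_cast <;> ring
        exact this.deriv
      have hQv : Q r s = -1 / r + s ^ 2 / r ^ 3 := rfl
      rw [R2, hQv, hQs r s, hQss, hQr, hQrs]
      field_simp
      ring
end
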